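/- arXiv:2401.17719 — 6 statements merged into one kernel-verified Lean document; each statement's English description precedes it below -/
import Mathlib

section
/- The following hold: (i) for every (t,x) ∈ [0,T]×ℝ, u(t,x) < α₀ if and only if x < b(t) (as extended reals); (ii) b is non-decreasing on [0,T]; (iii) b is left-continuous on (0,T]: for every t₀ ∈ (0,T] and every sequence tₙ increasing to t₀, b(tₙ) → b(t₀) in the extended reals; (iv) lim_{t↑T} b(t) = +∞. -/
/-!
For each `t` the set `{y | u t y < α₀}` is open (continuity in `x`) and downward closed
(monotonicity in `x`), hence the open half-line below `b t`; this gives (i). The sets grow with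
`t`, which gives (ii). Along `tₙ ↑ t₀` they exhaust the set at `t₀`, because `u tₙ y → u t₀ y`, so
(iii) is monotone convergence of suprema. Finally `u t r → u T r = 0 < α₀` as `t ↑ T`, so every
real `r` eventually lies below `b t`, which is (iv).
-/

open Set Filter Topology

theorem coe_lt_sSup_image_coe_iff {S : Set ℝ} (hS_open : IsOpen S) (hS_lower : IsLowerSet S)
    (x : ℝ) : (x : EReal) < sSup ((↑) '' S) ↔ x ∈ S := by
  constructor
  · intro hx
    obtain ⟨_, ⟨y, hy, rfl⟩, hxy⟩ := lt_sSup_iff.mp hx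
    exact hS_lower (EReal.coe_lt_coe_iff.mp hxy).le hy
  · intro hx
    obtain ⟨y, hxy, hy⟩ := (hS_open.eventually_mem hx).exists_gt
    exact (EReal.coe_lt_coe_iff.mpr hxy).trans_le (le_sSup (mem_image_of_mem _ hy))

theorem tendsto_sSup_image_coe_of_monotone {S : ℕ → Set ℝ} (hS : Monotone S) :
    Tendsto (fun n => sSup (((↑) : ℝ → EReal) '' S n)) atTop
      (𝓝 (sSup ((↑) '' ⋃ n, S n))) := by
  rw [image_iUnion, sSup_iUnion]
  exact tendsto_atTop_iSup fun m n hmn => sSup_le_sSup (image_mono (hS hmn))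

section ContinuousOnProd

variable {α β γ : Type*} [TopologicalSpace α] [TopologicalSpace β] [TopologicalSpace γ]
  {u : α → β → γ} {s : Set α}

theorem continuous_apply_of_continuousOn_prod
    (hu : ContinuousOn (fun p : α × β => u p.1 p.2) (s ×ˢ univ)) {t : α} (ht : t ∈ s) :
    Continuous (u t) :=
  hu.comp_continuous (Continuous.prodMk_right t) fun _ => ⟨ht, trivial⟩

theorem tendsto_apply_of_continuousOn_prod
    (hu : ContinuousOn (fun p : α × β => u p.1 p.2) (s ×ˢ univ)) {t₀ : α} (ht₀ : t₀ ∈ s)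
    {ι : Type*} {l : Filter ι} {f : ι → α} (hf : Tendsto f l (𝓝 t₀)) (hfs : ∀ᶠ i in l, f i ∈ s)
    (y : β) : Tendsto (fun i => u (f i) y) l (𝓝 (u t₀ y)) :=
  (hu (t₀, y) ⟨ht₀, trivial⟩).tendsto.comp <|
    tendsto_nhdsWithin_iff.2 ⟨hf.prodMk_nhds tendsto_const_nhds, hfs.mono fun _ hi => ⟨hi, trivial⟩⟩

end ContinuousOnProd

theorem iUnion_setOf_apply_lt_eq {α β : Type*} [TopologicalSpace α] [TopologicalSpace β]
    {u : α → β → ℝ} {s : Set α} (hu : ContinuousOn (fun p : α × β => u p.1 p.2) (s ×ˢ univ))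
    {t₀ : α} (ht₀ : t₀ ∈ s) {ι : Type*} {l : Filter ι} [l.NeBot] {f : ι → α}
    (hf : Tendsto f l (𝓝 t₀)) (hfs : ∀ᶠ i in l, f i ∈ s) (hle : ∀ i y, u t₀ y ≤ u (f i) y)
    (c : ℝ) : ⋃ i, {y | u (f i) y < c} = {y | u t₀ y < c} := by
  refine Subset.antisymm (iUnion_subset fun i y hy => (hle i y).trans_lt hy) fun y hy => ?_
  have hconv := tendsto_apply_of_continuousOn_prod hu ht₀ hf hfs y
  obtain ⟨i, hi⟩ := (hconv.eventually_lt_const hy).exists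
  exact mem_iUnion_of_mem i hi

theorem stmt_2_general (T : ℝ) (hT : 0 < T) (α₀ : ℝ) (hα₀ : 0 < α₀)
    (u : ℝ → ℝ → ℝ)
    (hu_cont : ContinuousOn (fun p : ℝ × ℝ => u p.1 p.2) (Set.Icc 0 T ×ˢ Set.univ))
    (hu_t : ∀ x : ℝ, ∀ s ∈ Set.Icc (0:ℝ) T, ∀ t ∈ Set.Icc (0:ℝ) T, s ≤ t → u t x ≤ u s x)
    (hu_x : ∀ t ∈ Set.Icc (0:ℝ) T, Monotone fun x => u t x)
    (hu_T : ∀ x : ℝ, u T x = 0)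
    (b : ℝ → EReal)
    (hb : ∀ t, b t = sSup ((fun y : ℝ => (y : EReal)) '' {y : ℝ | u t y < α₀})) :
    (∀ t ∈ Set.Icc (0:ℝ) T, ∀ x : ℝ, (u t x < α₀ ↔ (x : EReal) < b t)) ∧
    (∀ s ∈ Set.Icc (0:ℝ) T, ∀ t ∈ Set.Icc (0:ℝ) T, s ≤ t → b s ≤ b t) ∧
    (∀ t₀ ∈ Set.Ioc (0:ℝ) T, ∀ tn : ℕ → ℝ, (∀ n, tn n ∈ Set.Icc (0:ℝ) T) →
      Monotone tn → (∀ n, tn n < t₀) → Filter.Tendsto tn Filter.atTop (nhds t₀) →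
      Filter.Tendsto (fun n => b (tn n)) Filter.atTop (nhds (b t₀))) ∧
    Filter.Tendsto b (nhdsWithin T (Set.Iio T)) (nhds (⊤ : EReal)) := by
  have hS_mono : ∀ s ∈ Icc (0:ℝ) T, ∀ t ∈ Icc (0:ℝ) T, s ≤ t →
      {y | u s y < α₀} ⊆ {y | u t y < α₀} :=
    fun s hs t ht hst y hy => (hu_t y s hs t ht hst).trans_lt hy
  have hi : ∀ t ∈ Icc (0:ℝ) T, ∀ x : ℝ, u t x < α₀ ↔ (x : EReal) < b t := fun t ht x => by
    rw [hb, coe_lt_sSup_image_coe_iff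
      (isOpen_lt (continuous_apply_of_continuousOn_prod hu_cont ht) continuous_const)
      (fun _ _ hxy hy => (hu_x t ht hxy).trans_lt hy)]
    rfl
  refine ⟨hi, fun s hs t ht hst => ?_, ?_, ?_⟩
  · simpa only [hb] using sSup_le_sSup (image_mono (hS_mono s hs t ht hst))
  · intro t₀ ht₀ tn htn hmono hlt htend
    have ht₀' : t₀ ∈ Icc (0:ℝ) T := Ioc_subset_Icc_self ht₀
    have hunion := iUnion_setOf_apply_lt_eq hu_cont ht₀' htend (.of_forall htn)
      (fun n y => hu_t y _ (htn n) t₀ ht₀' (hlt n).le) α₀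
    have hconv := tendsto_sSup_image_coe_of_monotone fun m n hmn =>
      hS_mono _ (htn m) _ (htn n) (hmono hmn)
    simpa only [hunion, hb] using hconv
  · have hTmem : T ∈ Icc (0:ℝ) T := right_mem_Icc.2 hT.le
    have hIcc : ∀ᶠ t in 𝓝[<] T, t ∈ Icc (0:ℝ) T :=
      mem_of_superset (Ico_mem_nhdsLT hT) Ico_subset_Icc_self
    refine EReal.tendsto_nhds_top_iff_real.2 fun r => ?_
    have hu_r := tendsto_apply_of_continuousOn_prod hu_cont hTmem
      (tendsto_id.mono_left nhdsWithin_le_nhds) hIcc r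
    rw [hu_T] at hu_r
    filter_upwards [hIcc, hu_r.eventually_lt_const hα₀] with t ht hlt
    exact (hi t ht r).mp hlt

/-- properties of the action boundary `b(t) = sup{y : u(t,y) < α₀}`
(with `sup ∅ = −∞`): (i) `u(t,x) < α₀ ↔ x < b(t)` (as extended reals);
(ii) `b` non-decreasing; (iii) `b` left-continuous on `(0,T]`; (iv) `b(t) → +∞` as `t ↑ T`. -/
theorem stmt_2 (T : ℝ) (hT : 0 < T) (α₀ : ℝ) (hα₀ : 0 < α₀)
    (u : ℝ → ℝ → ℝ)
    (hu_cont : ContinuousOn (fun p : ℝ × ℝ => u p.1 p.2) (Set.Icc 0 T ×ˢ Set.univ))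
    (hu_le : ∀ t ∈ Set.Icc (0:ℝ) T, ∀ x : ℝ, u t x ≤ α₀)
    (hu_t : ∀ x : ℝ, ∀ s ∈ Set.Icc (0:ℝ) T, ∀ t ∈ Set.Icc (0:ℝ) T, s ≤ t → u t x ≤ u s x)
    (hu_x : ∀ t ∈ Set.Icc (0:ℝ) T, Monotone fun x => u t x)
    (hu_T : ∀ x : ℝ, u T x = 0)
    (b : ℝ → EReal)
    (hb : ∀ t, b t = sSup ((fun y : ℝ => (y : EReal)) '' {y : ℝ | u t y < α₀})) :
    (∀ t ∈ Set.Icc (0:ℝ) T, ∀ x : ℝ, (u t x < α₀ ↔ (x : EReal) < b t)) ∧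
    (∀ s ∈ Set.Icc (0:ℝ) T, ∀ t ∈ Set.Icc (0:ℝ) T, s ≤ t → b s ≤ b t) ∧
    (∀ t₀ ∈ Set.Ioc (0:ℝ) T, ∀ tn : ℕ → ℝ, (∀ n, tn n ∈ Set.Icc (0:ℝ) T) →
      Monotone tn → (∀ n, tn n < t₀) → Filter.Tendsto tn Filter.atTop (nhds t₀) →
      Filter.Tendsto (fun n => b (tn n)) Filter.atTop (nhds (b t₀))) ∧
    Filter.Tendsto b (nhdsWithin T (Set.Iio T)) (nhds (⊤ : EReal)) :=
  stmt_2_general T hT α₀ hα₀ u hu_cont hu_t hu_x hu_T b hb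
end

section
/- The pair (X,ν) solves the Skorokhod reflection problem below the barrier f: ν is continuous and non-increasing on [0,T], ν(0) = −max(ψ(0) − f(0), 0), X(0) = min(ψ(0), f(0)), X(s) ≤ f(s) for all s ∈ [0,T], and for every s₀ ∈ [0,T) with X(s₀) < f(s₀) there exists δ > 0 such that ν is constant on (s₀ − δ, s₀ + δ) ∩ [0,T]. -/
/-!
Write `h = ψ - f` and `M s = sup_{[0,s]} h`; since `x ↦ max x 0` is monotone and continuous,
`ν = -max M 0`. As `f` is monotone and left-continuous it is lower semicontinuous, so `h` is upper
semicontinuous and left-continuous. This is exactly what makes the running supremum `M`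
continuous: upper semicontinuity controls it from the right, left-continuity from the left.
If `h s₀ < M s₀`, upper semicontinuity keeps `h` below some `c < M s₀` near `s₀`, so `M` is
locally constant there; otherwise `h s₀ = M s₀ < 0`, and `max M 0 = 0` near `s₀` by continuity.
-/

open Set Filter Topology

noncomputable def runningSup (g : ℝ → ℝ) (a s : ℝ) : ℝ :=
  sSup (g '' Icc a s)

theorem Filter.Eventually.forall_uIcc_nhdsWithin {p : ℝ → Prop} {S : Set ℝ} {s : ℝ}
    (hS : S.OrdConnected) (hs : s ∈ S) (h : ∀ᶠ w in 𝓝[S] s, p w) :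
    ∀ᶠ x in 𝓝[S] s, ∀ w ∈ uIcc x s, p w := by
  obtain ⟨δ, hδ, hp⟩ := Metric.mem_nhdsWithin_iff.1 h
  filter_upwards [inter_mem_nhdsWithin S (Metric.ball_mem_nhds s hδ), self_mem_nhdsWithin]
    with x hx hxS w hw
  exact hp ⟨(Real.dist_right_le_of_mem_uIcc hw).trans_lt hx.2, hS.uIcc_subset hxS hs hw⟩

theorem MonotoneOn.lowerSemicontinuousOn_Icc {f : ℝ → ℝ} {a b : ℝ}
    (hf : MonotoneOn f (Icc a b)) (hf_left : ∀ x ∈ Icc a b, ContinuousWithinAt f (Icc a x) x) :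
    LowerSemicontinuousOn f (Icc a b) := by
  intro x hx y hy
  rw [← Icc_union_Icc_eq_Icc hx.1 hx.2, nhdsWithin_union, eventually_sup]
  refine ⟨(hf_left x hx).eventually_const_lt hy, eventually_nhdsWithin_of_forall fun w hw => ?_⟩
  exact hy.trans_le (hf hx ⟨hx.1.trans hw.1, hw.2⟩ hw.1)

theorem ContinuousOn.upperSemicontinuousOn_sub {ψ f : ℝ → ℝ} {s : Set ℝ}
    (hψ : ContinuousOn ψ s) (hf : LowerSemicontinuousOn f s) :
    UpperSemicontinuousOn (ψ - f) s := by
  intro x hx y hy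
  have hd : 0 < y - (ψ x - f x) := sub_pos.2 hy
  filter_upwards [(hψ x hx).eventually_lt_const (lt_add_of_pos_right (ψ x) (half_pos hd)),
    hf x hx _ (sub_lt_self (f x) (half_pos hd))] with w hψw hfw
  simp only [Pi.sub_apply]
  linarith

section runningSup

variable {g : ℝ → ℝ} {a T : ℝ}

theorem le_runningSup (hbdd : BddAbove (g '' Icc a T)) {s w : ℝ} (hw : w ∈ Icc a s)
    (hs : s ≤ T) : g w ≤ runningSup g a s :=
  le_csSup (hbdd.mono (image_mono (Icc_subset_Icc_right hs))) (mem_image_of_mem g hw)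

theorem runningSup_monotoneOn (hbdd : BddAbove (g '' Icc a T)) :
    MonotoneOn (runningSup g a) (Icc a T) := fun _ hs _ ht hst =>
  csSup_le_csSup (hbdd.mono (image_mono (Icc_subset_Icc_right ht.2)))
    ⟨g a, mem_image_of_mem g (left_mem_Icc.2 hs.1)⟩ (image_mono (Icc_subset_Icc_right hst))

theorem runningSup_le_max (hbdd : BddAbove (g '' Icc a T)) {s t K : ℝ} (hs : s ∈ Icc a t)
    (ht : t ≤ T) (hK : ∀ w ∈ Ioc s t, g w ≤ K) :
    runningSup g a t ≤ max (runningSup g a s) K := by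
  refine csSup_le ⟨g a, mem_image_of_mem g (left_mem_Icc.2 (hs.1.trans hs.2))⟩ ?_
  rintro _ ⟨w, hw, rfl⟩
  rcases le_or_gt w s with hws | hsw
  · exact le_max_of_le_left (le_runningSup hbdd ⟨hw.1, hws⟩ (hs.2.trans ht))
  · exact le_max_of_le_right (hK w ⟨hsw, hw.2⟩)

theorem runningSup_max_const (hbdd : BddAbove (g '' Icc a T)) {s : ℝ} (hs : s ∈ Icc a T)
    (c : ℝ) : runningSup (fun u => max (g u) c) a s = max (runningSup g a s) c := by
  rw [runningSup, ← image_image (fun x => max x c) g,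
    ← Monotone.map_csSup_of_continuousAt (f := fun x => max x c)
      (continuous_id.max continuous_const).continuousAt
      (fun _ _ h => max_le_max_right c h) ⟨g a, mem_image_of_mem g (left_mem_Icc.2 hs.1)⟩
      (hbdd.mono (image_mono (Icc_subset_Icc_right hs.2)))]
  rfl

theorem continuousWithinAt_runningSup_Icc_right (hbdd : BddAbove (g '' Icc a T)) {s : ℝ}
    (hs : s ∈ Icc a T) (hg : UpperSemicontinuousWithinAt g (Icc a T) s) :
    ContinuousWithinAt (runningSup g a) (Icc s T) s := by
  refine tendsto_order.2 ⟨fun b hb => ?_, fun b hb => ?_⟩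
  · filter_upwards [self_mem_nhdsWithin] with x hx
    exact hb.trans_le (runningSup_monotoneOn hbdd hs ⟨hs.1.trans hx.1, hx.2⟩ hx.1)
  obtain ⟨c, hMc, hcb⟩ := exists_between hb
  have hgc := (hg c ((le_runningSup hbdd (right_mem_Icc.2 hs.1) hs.2).trans_lt hMc)
    ).forall_uIcc_nhdsWithin ordConnected_Icc hs
  filter_upwards [nhdsWithin_mono s (Icc_subset_Icc_left hs.1) hgc, self_mem_nhdsWithin]
    with x hx hxs
  calc runningSup g a x ≤ max (runningSup g a s) c :=
        runningSup_le_max hbdd ⟨hs.1, hxs.1⟩ hxs.2 fun w hw =>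
          (hx w (uIcc_comm s x ▸ Icc_subset_uIcc (Ioc_subset_Icc_self hw))).le
    _ < b := max_lt (hMc.trans hcb) hcb

theorem continuousWithinAt_runningSup_Icc_left (hbdd : BddAbove (g '' Icc a T)) {s : ℝ}
    (hs : s ∈ Icc a T) (hg : ContinuousWithinAt g (Icc a s) s) :
    ContinuousWithinAt (runningSup g a) (Icc a s) s := by
  refine tendsto_order.2 ⟨fun b hb => ?_, fun b hb => ?_⟩
  · set ε := runningSup g a s - b
    have hε : 0 < ε / 3 := by positivity
    have hgs := hg.eventually_lt_const (lt_add_of_pos_right (g s) hε)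
    filter_upwards [hgs.forall_uIcc_nhdsWithin ordConnected_Icc (right_mem_Icc.2 hs.1),
      hg.eventually_const_lt (sub_lt_self (g s) hε), self_mem_nhdsWithin] with x hx hgx hxs
    have hM := runningSup_le_max hbdd hxs hs.2 fun w hw =>
      (hx w (Icc_subset_uIcc (Ioc_subset_Icc_self hw))).le
    have hgxM := le_runningSup hbdd (right_mem_Icc.2 hxs.1) (hxs.2.trans hs.2)
    rcases le_max_iff.1 hM with h | h <;> linarith
  · filter_upwards [self_mem_nhdsWithin] with x hx
    exact (runningSup_monotoneOn hbdd ⟨hx.1, hx.2.trans hs.2⟩ hs hx.2).trans_lt hb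

theorem continuousOn_runningSup (hbdd : BddAbove (g '' Icc a T))
    (hg : UpperSemicontinuousOn g (Icc a T))
    (hg_left : ∀ s ∈ Icc a T, ContinuousWithinAt g (Icc a s) s) :
    ContinuousOn (runningSup g a) (Icc a T) := fun s hs => by
  rw [← Icc_union_Icc_eq_Icc hs.1 hs.2]
  exact (continuousWithinAt_runningSup_Icc_left hbdd hs (hg_left s hs)).union
    (continuousWithinAt_runningSup_Icc_right hbdd hs (hg s hs))

theorem runningSup_eventuallyEq_of_lt (hbdd : BddAbove (g '' Icc a T)) {s₀ : ℝ}
    (hs₀ : s₀ ∈ Icc a T) (hg : UpperSemicontinuousWithinAt g (Icc a T) s₀)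
    (hlt : g s₀ < runningSup g a s₀) :
    ∀ᶠ u in 𝓝[Icc a T] s₀, runningSup g a u = runningSup g a s₀ := by
  obtain ⟨c, hgc, hcM⟩ := exists_between hlt
  filter_upwards [(hg c hgc).forall_uIcc_nhdsWithin ordConnected_Icc hs₀, self_mem_nhdsWithin]
    with u hu huT
  have hM := runningSup_monotoneOn hbdd
  rcases le_total u s₀ with hus | hsu
  · have h := runningSup_le_max hbdd ⟨huT.1, hus⟩ hs₀.2 fun w hw =>
      (hu w (Icc_subset_uIcc (Ioc_subset_Icc_self hw))).le
    exact le_antisymm (hM huT hs₀ hus) ((le_max_iff.1 h).resolve_right hcM.not_ge)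
  · have h := runningSup_le_max hbdd ⟨hs₀.1, hsu⟩ huT.2 fun w hw =>
      (hu w (uIcc_comm s₀ u ▸ Icc_subset_uIcc (Ioc_subset_Icc_self hw))).le
    exact le_antisymm (h.trans (max_le le_rfl hcM.le)) (hM hs₀ huT hsu)

theorem max_runningSup_eventuallyEq_of_lt (hbdd : BddAbove (g '' Icc a T)) {s₀ c : ℝ}
    (hs₀ : s₀ ∈ Icc a T) (hg : UpperSemicontinuousWithinAt g (Icc a T) s₀)
    (hM : ContinuousWithinAt (runningSup g a) (Icc a T) s₀)
    (hlt : g s₀ < max (runningSup g a s₀) c) :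
    ∀ᶠ u in 𝓝[Icc a T] s₀, max (runningSup g a u) c = max (runningSup g a s₀) c := by
  rcases lt_or_ge (g s₀) (runningSup g a s₀) with h | h
  · filter_upwards [runningSup_eventuallyEq_of_lt hbdd hs₀ hg h] with u hu
    rw [hu]
  · have hMc : runningSup g a s₀ < c := by
      by_contra! hcM
      rw [max_eq_left hcM] at hlt
      exact hlt.not_ge h
    filter_upwards [hM.eventually_lt_const hMc] with u hu
    rw [max_eq_right hu.le, max_eq_right hMc.le]

end runningSup

theorem stmt_4_general (T : ℝ) (f ψ : ℝ → ℝ)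
    (hf_mono : MonotoneOn f (Set.Icc 0 T))
    (hf_lc : ∀ t ∈ Set.Ioc (0:ℝ) T, Filter.Tendsto f (nhdsWithin t (Set.Iio t)) (nhds (f t)))
    (hψ : ContinuousOn ψ (Set.Icc 0 T))
    (ν X : ℝ → ℝ)
    (hν : ∀ s, ν s = -sSup ((fun u => max (ψ u - f u) 0) '' Set.Icc 0 s))
    (hX : ∀ s, X s = ψ s + ν s) :
    ContinuousOn ν (Set.Icc 0 T) ∧ AntitoneOn ν (Set.Icc 0 T) ∧
    ν 0 = -max (ψ 0 - f 0) 0 ∧ X 0 = min (ψ 0) (f 0) ∧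
    (∀ s ∈ Set.Icc (0:ℝ) T, X s ≤ f s) ∧
    (∀ s₀ ∈ Set.Ico (0:ℝ) T, X s₀ < f s₀ →
      ∃ δ > 0, ∀ u ∈ Set.Ioo (s₀ - δ) (s₀ + δ) ∩ Set.Icc 0 T,
        ∀ w ∈ Set.Ioo (s₀ - δ) (s₀ + δ) ∩ Set.Icc 0 T, ν u = ν w) := by
  have hf_left : ∀ s ∈ Icc 0 T, ContinuousWithinAt f (Icc 0 s) s := fun s hs => by
    rcases hs.1.eq_or_lt with rfl | hs0
    · simpa only [Icc_self] using continuousWithinAt_singleton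
    · exact (continuousWithinAt_Iio_iff_Iic.1 (hf_lc s ⟨hs0, hs.2⟩)).mono Icc_subset_Iic_self
  have hh : UpperSemicontinuousOn (ψ - f) (Icc 0 T) :=
    hψ.upperSemicontinuousOn_sub (hf_mono.lowerSemicontinuousOn_Icc hf_left)
  have hh_left (s) (hs : s ∈ Icc 0 T) : ContinuousWithinAt (ψ - f) (Icc 0 s) s :=
    ((hψ s hs).mono (Icc_subset_Icc_right hs.2)).sub (hf_left s hs)
  have hbdd := hh.bddAbove_of_isCompact isCompact_Icc
  have hM : ContinuousOn (runningSup (ψ - f) 0) (Icc 0 T) :=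
    continuousOn_runningSup hbdd hh hh_left
  have hνM : ∀ s ∈ Icc 0 T, ν s = -max (runningSup (ψ - f) 0 s) 0 := fun s hs => by
    rw [hν, ← runningSup_max_const hbdd hs]
    rfl
  have hν0 : ν 0 = -max (ψ 0 - f 0) 0 := by
    rw [hν, Icc_self, image_singleton, csSup_singleton]
  refine ⟨((hM.sup continuousOn_const).neg).congr hνM, fun s hs t ht hst => ?_, hν0, ?_,
    fun s hs => ?_, fun s₀ hs₀ hlt => ?_⟩
  · rw [hνM s hs, hνM t ht]
    exact neg_le_neg (max_le_max_right 0 (runningSup_monotoneOn hbdd hs ht hst))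
  · rw [hX, hν0]
    rcases le_total (ψ 0) (f 0) with h | h
    · rw [max_eq_right (sub_nonpos.2 h), min_eq_left h]; ring
    · rw [max_eq_left (sub_nonneg.2 h), min_eq_right h]; ring
  · have h := le_runningSup hbdd (right_mem_Icc.2 hs.1) hs.2
    rw [hX, hνM s hs]
    simp only [Pi.sub_apply] at h
    linarith [le_max_left (runningSup (ψ - f) 0 s) 0]
  · have hs₀' := Ico_subset_Icc_self hs₀
    rw [hX, hνM s₀ hs₀', ← sub_eq_add_neg, sub_lt_comm] at hlt
    have hconst := max_runningSup_eventuallyEq_of_lt hbdd hs₀' (hh s₀ hs₀') (hM s₀ hs₀')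
      (c := 0) (by simpa using hlt)
    obtain ⟨δ, hδ, hsub⟩ := Metric.mem_nhdsWithin_iff.1
      (hconst.and self_mem_nhdsWithin)
    rw [Real.ball_eq_Ioo] at hsub
    refine ⟨δ, hδ, fun u hu w hw => ?_⟩
    rw [hνM u (hsub hu).2, hνM w (hsub hw).2, (hsub hu).1, (hsub hw).1]

/-- the pair `(X, ν)` with `ν(s) = −sup_{u∈[0,s]} max(ψ(u)−f(u),0)` and
`X = ψ + ν` solves the Skorokhod reflection problem below the barrier `f`. -/
theorem stmt_4 (T : ℝ) (hT : 0 < T) (f ψ : ℝ → ℝ)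
    (hf_mono : MonotoneOn f (Set.Icc 0 T))
    (hf_lc : ∀ t ∈ Set.Ioc (0:ℝ) T, Filter.Tendsto f (nhdsWithin t (Set.Iio t)) (nhds (f t)))
    (hψ : ContinuousOn ψ (Set.Icc 0 T))
    (ν X : ℝ → ℝ)
    (hν : ∀ s, ν s = -sSup ((fun u => max (ψ u - f u) 0) '' Set.Icc 0 s))
    (hX : ∀ s, X s = ψ s + ν s) :
    ContinuousOn ν (Set.Icc 0 T) ∧ AntitoneOn ν (Set.Icc 0 T) ∧
    ν 0 = -max (ψ 0 - f 0) 0 ∧ X 0 = min (ψ 0) (f 0) ∧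
    (∀ s ∈ Set.Icc (0:ℝ) T, X s ≤ f s) ∧
    (∀ s₀ ∈ Set.Ico (0:ℝ) T, X s₀ < f s₀ →
      ∃ δ > 0, ∀ u ∈ Set.Ioo (s₀ - δ) (s₀ + δ) ∩ Set.Icc 0 T,
        ∀ w ∈ Set.Ioo (s₀ - δ) (s₀ + δ) ∩ Set.Icc 0 T, ν u = ν w) :=
  stmt_4_general T f ψ hf_mono hf_lc hψ ν X hν hX
end

section
/- For every non-negative smooth function φ : ℝ² → ℝ with compact support contained in U, one has ∬_U u(t,x)·( −∂_t φ(t,x) + (G*φ)(t,x) ) dt dx ≥ − ∬_U ℓ(t,x)·φ(t,x) dt dx. -/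
open MeasureTheory Set Filter Topology Manifold ContDiff

/-- slice derivative in first coordinate gives a line derivative in direction (1,0) -/
lemma stmt7_lineDeriv_fst {f : ℝ × ℝ → ℝ} {d t x : ℝ}
    (h : HasDerivAt (fun s => f (s, x)) d t) :
    HasLineDerivAt ℝ f d (t, x) (1, 0) := by
  have h2 : HasDerivAt (fun τ : ℝ => t + τ) 1 0 := by
    simpa using (hasDerivAt_id (0:ℝ)).const_add t
  have h' : HasDerivAt (fun s => f (s, x)) d (t + 0) := by simpa using h
  have h3 := h'.comp 0 h2
  have : HasDerivAt (fun τ : ℝ => f (t + τ, x)) d 0 := by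
    simpa [Function.comp_def] using h3
  unfold HasLineDerivAt
  refine this.congr_of_eventuallyEq (Filter.Eventually.of_forall fun τ => ?_)
  simp [Prod.ext_iff]

/-- slice derivative in second coordinate gives a line derivative in direction (0,1) -/
lemma stmt7_lineDeriv_snd {f : ℝ × ℝ → ℝ} {d t x : ℝ}
    (h : HasDerivAt (fun y => f (t, y)) d x) :
    HasLineDerivAt ℝ f d (t, x) (0, 1) := by
  have h2 : HasDerivAt (fun τ : ℝ => x + τ) 1 0 := by
    simpa using (hasDerivAt_id (0:ℝ)).const_add x
  have h' : HasDerivAt (fun y => f (t, y)) d (x + 0) := by simpa using h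
  have h3 := h'.comp 0 h2
  have : HasDerivAt (fun τ : ℝ => f (t, x + τ)) d 0 := by
    simpa [Function.comp_def] using h3
  unfold HasLineDerivAt
  refine this.congr_of_eventuallyEq (Filter.Eventually.of_forall fun τ => ?_)
  simp [Prod.ext_iff]

/-- slice of a differentiable 2D function is differentiable in first coordinate -/
lemma stmt7_slice_fst {f : ℝ × ℝ → ℝ} (hf : Differentiable ℝ f) (t x : ℝ) :
    HasDerivAt (fun s => f (s, x)) (fderiv ℝ f (t, x) (1, 0)) t :=
  (hf (t, x)).hasFDerivAt.comp_hasDerivAt t ((hasDerivAt_id t).prodMk (hasDerivAt_const t x))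

lemma stmt7_slice_snd {f : ℝ × ℝ → ℝ} (hf : Differentiable ℝ f) (t x : ℝ) :
    HasDerivAt (fun y => f (t, y)) (fderiv ℝ f (t, x) (0, 1)) x :=
  (hf (t, x)).hasFDerivAt.comp_hasDerivAt x ((hasDerivAt_const x t).prodMk (hasDerivAt_id x))

lemma stmt7_lineDeriv_zero {f : ℝ × ℝ → ℝ} {p v : ℝ × ℝ} {S : Set (ℝ × ℝ)}
    (hS : IsOpen S) (hp : p ∈ S) (h0 : ∀ q ∈ S, f q = 0) :
    HasLineDerivAt ℝ f 0 p v := by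
  have hcont : Tendsto (fun τ : ℝ => p + τ • v) (𝓝 0) (𝓝 p) := by
    have : Continuous (fun τ : ℝ => p + τ • v) := by continuity
    simpa using this.tendsto 0
  have hev : ∀ᶠ τ in 𝓝 (0:ℝ), f (p + τ • v) = 0 := by
    filter_upwards [hcont.eventually (hS.eventually_mem hp)] with τ hτ
    exact h0 _ hτ
  unfold HasLineDerivAt
  exact (hasDerivAt_const (0:ℝ) (0:ℝ)).congr_of_eventuallyEq hev

/-- smooth cutoff: 1 on a neighborhood of `K`, compactly supported in `U`. -/
lemma stmt7_cutoff {K U : Set (ℝ × ℝ)} (hK : IsCompact K) (hU : IsOpen U) (hKU : K ⊆ U) :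
    ∃ χ : ℝ × ℝ → ℝ, ContDiff ℝ ((⊤:ℕ∞) : WithTop ℕ∞) χ ∧ HasCompactSupport χ ∧ tsupport χ ⊆ U ∧
      (∀ p, χ p ∈ Icc (0:ℝ) 1) ∧ ∃ W : Set (ℝ × ℝ), IsOpen W ∧ K ⊆ W ∧ ∀ p ∈ W, χ p = 1 := by
  obtain ⟨L₂, hL₂c, hKL₂, hL₂U⟩ := exists_compact_between hK hU hKU
  obtain ⟨L₁, hL₁c, hKL₁, hL₁L₂⟩ := exists_compact_between hK isOpen_interior hKL₂
  obtain ⟨g, hg0, hg1, hg01⟩ :=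
    exists_contMDiffMap_zero_one_of_isClosed (𝓘(ℝ, ℝ × ℝ)) (n := (⊤:ℕ∞))
      (isClosed_compl_iff.mpr isOpen_interior : IsClosed (interior L₂)ᶜ)
      hL₁c.isClosed (by
        rw [Set.disjoint_compl_left_iff_subset]
        exact hL₁L₂)
  have hts : tsupport ⇑g ⊆ L₂ := by
    refine closure_minimal ?_ hL₂c.isClosed
    intro q hq
    by_contra hqc
    exact hq (hg0 (fun h => hqc (interior_subset h)))
  refine ⟨⇑g, ?_, ?_, hts.trans hL₂U, hg01, interior L₁, isOpen_interior, hKL₁, fun p hp => ?_⟩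
  · exact contMDiff_iff_contDiff.mp g.contMDiff
  · exact IsCompact.of_isClosed_subset hL₂c (isClosed_tsupport _) hts
  · exact hg1 (interior_subset hp)

/-- a function on an open subset of the plane with continuous partial `t`-derivative and
separately continuous in `x` is (jointly) continuous. -/
lemma stmt7_contOn {U : Set (ℝ × ℝ)} (hU : IsOpen U) {f ft : ℝ × ℝ → ℝ}
    (h_t : ∀ p ∈ U, HasDerivAt (fun t => f (t, p.2)) (ft p) p.1)
    (h_x : ∀ p ∈ U, ContinuousAt (fun x => f (p.1, x)) p.2)
    (hc_t : ContinuousOn ft U) : ContinuousOn f U := by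
  intro p₀ hp₀
  obtain ⟨ε, εpos, hball⟩ := Metric.isOpen_iff.mp hU p₀ hp₀
  have hBU : Metric.closedBall p₀ (ε / 2) ⊆ U := fun q hq =>
    hball (lt_of_le_of_lt (Metric.mem_closedBall.mp hq) (by linarith))
  obtain ⟨M, hM⟩ := (isCompact_closedBall p₀ (ε / 2)).exists_bound_of_continuousOn
    (hc_t.mono hBU)
  have hM0 : 0 ≤ M := le_trans (norm_nonneg _) (hM p₀ (Metric.mem_closedBall_self (by linarith)))
  refine ContinuousAt.continuousWithinAt ?_
  rw [Metric.continuousAt_iff]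
  intro δ' δ'pos
  have hx := Metric.continuousAt_iff.mp (h_x p₀ hp₀) (δ' / 2) (by linarith)
  obtain ⟨δ₁, δ₁pos, hδ₁⟩ := hx
  refine ⟨min (min δ₁ (ε / 2)) (δ' / (2 * (M + 1))), by positivity, ?_⟩
  intro q hq
  have hq1 : dist q.1 p₀.1 < min (min δ₁ (ε / 2)) (δ' / (2 * (M + 1))) :=
    lt_of_le_of_lt (le_max_left _ _ |>.trans (le_of_eq (Prod.dist_eq (x := q) (y := p₀)).symm)) hq
  have hq2 : dist q.2 p₀.2 < min (min δ₁ (ε / 2)) (δ' / (2 * (M + 1))) :=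
    lt_of_le_of_lt (le_max_right _ _ |>.trans (le_of_eq (Prod.dist_eq (x := q) (y := p₀)).symm)) hq
  -- first leg: from (q.1, q.2) to (p₀.1, q.2)
  have hseg : ∀ s ∈ uIcc p₀.1 q.1, (s, q.2) ∈ Metric.closedBall p₀ (ε / 2) := by
    intro s hs
    rw [Metric.mem_closedBall, Prod.dist_eq]
    refine max_le ?_ ?_
    · calc dist s p₀.1 ≤ dist p₀.1 q.1 := by
            simpa [dist_comm] using Real.dist_left_le_of_mem_uIcc hs
        _ ≤ ε / 2 := le_of_lt (lt_of_lt_of_le (by simpa [dist_comm] using hq1)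
            ((min_le_left _ _).trans (min_le_right _ _)))
    · exact le_of_lt (lt_of_lt_of_le hq2 ((min_le_left _ _).trans (min_le_right _ _)))
  have leg1 : ‖f (q.1, q.2) - f (p₀.1, q.2)‖ ≤ M * ‖q.1 - p₀.1‖ := by
    refine Convex.norm_image_sub_le_of_norm_hasDerivWithin_le
      (f := fun s => f (s, q.2)) (f' := fun s => ft (s, q.2)) (C := M)
      (fun s hs => ((h_t (s, q.2) (hBU (hseg s hs))).congr_of_eventuallyEq
        (by filter_upwards with y; rfl)).hasDerivWithinAt)
      (fun s hs => hM _ (hseg s hs)) (convex_uIcc _ _) left_mem_uIcc right_mem_uIcc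
  have leg2 : dist (f (p₀.1, q.2)) (f (p₀.1, p₀.2)) < δ' / 2 := by
    exact hδ₁ (lt_of_lt_of_le hq2 ((min_le_left _ _).trans (min_le_left _ _)))
  have hle : M * ‖q.1 - p₀.1‖ < δ' / 2 := by
    have h1 : ‖q.1 - p₀.1‖ < δ' / (2 * (M + 1)) := by
      rw [← dist_eq_norm]; exact lt_of_lt_of_le hq1 (min_le_right _ _)
    have h2 : M * ‖q.1 - p₀.1‖ ≤ (M+1) * ‖q.1 - p₀.1‖ := by nlinarith [norm_nonneg (q.1 - p₀.1)]
    have h3 : (M+1) * ‖q.1 - p₀.1‖ < (M+1) * (δ' / (2 * (M + 1))) := by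
      apply mul_lt_mul_of_pos_left h1; linarith
    have h4 : (M+1) * (δ' / (2 * (M + 1))) = δ' / 2 := by field_simp
    linarith
  calc dist (f q) (f p₀) ≤ dist (f q) (f (p₀.1, q.2)) + dist (f (p₀.1, q.2)) (f p₀) :=
        dist_triangle _ _ _
    _ < δ' / 2 + δ' / 2 := by
        refine add_lt_add_of_lt_of_le ?_ (le_of_lt ?_)
        · have : f q = f (q.1, q.2) := by rfl
          rw [this, dist_eq_norm]
          exact lt_of_le_of_lt leg1 hle
        · exact leg2
    _ = δ' := by ring
set_option maxHeartbeats 2000000 in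
/-- if `uₙ` are classical supersolutions of `∂_t uₙ + G uₙ ≥ −ℓ` on the
open set `U` converging locally uniformly to `u`, then for every non-negative smooth
test function `φ` compactly supported in `U`,
`∬ u (−∂_t φ + G* φ) ≥ −∬ ℓ φ`. -/
theorem stmt_7 (U : Set (ℝ × ℝ)) (hU : IsOpen U)
    (σ₀ σ₁ r : ℝ) (μ μ' : ℝ → ℝ)
    (hμ : ∀ x, HasDerivAt μ (μ' x) x) (hμ' : Continuous μ')
    (ℓ : ℝ × ℝ → ℝ) (hℓ : ContinuousOn ℓ U)
    (un unt unx unxx : ℕ → ℝ × ℝ → ℝ)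
    (h_t : ∀ n, ∀ p ∈ U, HasDerivAt (fun t => un n (t, p.2)) (unt n p) p.1)
    (h_x : ∀ n, ∀ p ∈ U, HasDerivAt (fun x => un n (p.1, x)) (unx n p) p.2)
    (h_xx : ∀ n, ∀ p ∈ U, HasDerivAt (fun x => unx n (p.1, x)) (unxx n p) p.2)
    (hc_t : ∀ n, ContinuousOn (unt n) U) (hc_x : ∀ n, ContinuousOn (unx n) U)
    (hc_xx : ∀ n, ContinuousOn (unxx n) U)
    (hineq : ∀ n, ∀ p ∈ U,
      -ℓ p ≤ unt n p + (σ₀ + σ₁ * p.2) ^ 2 / 2 * unxx n p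
        + ((σ₀ + σ₁ * p.2) * σ₁ + μ p.2) * unx n p - (r - μ' p.2) * un n p)
    (u : ℝ × ℝ → ℝ)
    (hconv : TendstoLocallyUniformlyOn un u Filter.atTop U)
    (φ : ℝ × ℝ → ℝ) (hφ : ContDiff ℝ (⊤ : ℕ∞) φ) (hφc : HasCompactSupport φ)
    (hφU : tsupport φ ⊆ U) (hφpos : ∀ p, 0 ≤ φ p) :
    -∫ p : ℝ × ℝ, ℓ p * φ p ≤
      ∫ p : ℝ × ℝ, u p *
        (-(deriv (fun t => φ (t, p.2)) p.1)
          + (deriv (fun x => deriv (fun y => (σ₀ + σ₁ * y) ^ 2 / 2 * φ (p.1, y)) x) p.2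
             - deriv (fun x => ((σ₀ + σ₁ * x) * σ₁ + μ x) * φ (p.1, x)) p.2
             - (r - μ' p.2) * φ p)) := by
  classical
  -- basic smoothness facts for φ
  have hφs : ContDiff ℝ (∞ : WithTop ℕ∞) φ := hφ.of_le (by simp)
  have h1le : (1 : WithTop ℕ∞) ≤ ∞ := by exact_mod_cast (le_top : (1:ℕ∞) ≤ ⊤)
  have hφd : Differentiable ℝ φ := hφs.differentiable (by simp)
  set φt : ℝ × ℝ → ℝ := fun p => fderiv ℝ φ p (1, 0) with hφtdef
  set φx : ℝ × ℝ → ℝ := fun p => fderiv ℝ φ p (0, 1) with hφxdef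
  have hφxs : ContDiff ℝ (∞ : WithTop ℕ∞) φx :=
    (hφs.fderiv_right (by norm_num)).clm_apply contDiff_const
  have hφxd : Differentiable ℝ φx := hφxs.differentiable (by simp)
  set φxx : ℝ × ℝ → ℝ := fun p => fderiv ℝ φx p (0, 1) with hφxxdef
  have hφtc : Continuous φt := ((hφs.fderiv_right (m := ∞) (by norm_num)).clm_apply contDiff_const).continuous
  have hφxc : Continuous φx := hφxs.continuous
  have hφxxc : Continuous φxx :=
    ((hφxs.fderiv_right (m := ∞) (by norm_num)).clm_apply contDiff_const).continuous
  -- vanishing of φ and its derivatives off K := tsupport φ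
  have hφ0 : ∀ p ∉ tsupport φ, φ p = 0 := fun p hp => image_eq_zero_of_notMem_tsupport hp
  have hfd0 : ∀ p ∉ tsupport φ, fderiv ℝ φ p = 0 := fun p hp =>
    Function.notMem_support.mp (fun hs => hp (support_fderiv_subset ℝ hs))
  have hφt0 : ∀ p ∉ tsupport φ, φt p = 0 := fun p hp => by
    simp [hφtdef, hfd0 p hp]
  have hφx0 : ∀ p ∉ tsupport φ, φx p = 0 := fun p hp => by
    simp [hφxdef, hfd0 p hp]
  have hφxts : tsupport φx ⊆ tsupport φ := by
    refine closure_minimal (fun q hq => ?_) (isClosed_tsupport φ)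
    by_contra h
    exact hq (hφx0 q h)
  have hφxx0 : ∀ p ∉ tsupport φ, φxx p = 0 := fun p hp => by
    have : fderiv ℝ φx p = 0 :=
      Function.notMem_support.mp (fun hs => hp (hφxts (support_fderiv_subset ℝ hs)))
    simp [hφxxdef, this]
  -- derivative of slices of φ as functions
  have hφslice1 : ∀ t x : ℝ, HasDerivAt (fun s => φ (s, x)) (φt (t, x)) t :=
    fun t x => stmt7_slice_fst hφd t x
  have hφslice2 : ∀ t x : ℝ, HasDerivAt (fun y => φ (t, y)) (φx (t, x)) x :=
    fun t x => stmt7_slice_snd hφd t x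
  have hφxslice2 : ∀ t x : ℝ, HasDerivAt (fun y => φx (t, y)) (φxx (t, x)) x :=
    fun t x => stmt7_slice_snd hφxd t x
  -- coefficient derivatives
  have hlin : ∀ x : ℝ, HasDerivAt (fun y => σ₀ + σ₁ * y) σ₁ x := fun x => by
    simpa using ((hasDerivAt_id x).const_mul σ₁).const_add σ₀
  have hlc : Continuous (fun y : ℝ => σ₀ + σ₁ * y) := by continuity
  have ha : ∀ x : ℝ, HasDerivAt (fun y => (σ₀ + σ₁ * y) ^ 2 / 2) ((σ₀ + σ₁ * x) * σ₁) x := by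
    intro x
    have h := ((hlin x).pow 2).div_const 2
    refine h.congr_deriv ?_
    push_cast
    ring
  have ha' : ∀ x : ℝ, HasDerivAt (fun y => (σ₀ + σ₁ * y) * σ₁) (σ₁ * σ₁) x := fun x => by
    simpa using (hlin x).mul_const σ₁
  have hb : ∀ x : ℝ, HasDerivAt (fun y => (σ₀ + σ₁ * y) * σ₁ + μ y) (σ₁ * σ₁ + μ' x) x :=
    fun x => (ha' x).add (hμ x)
  have hμc : Continuous μ := continuous_iff_continuousAt.mpr fun x => (hμ x).continuousAt
  -- test-function-side integrands
  set Aφ : ℝ × ℝ → ℝ := fun p => (σ₀ + σ₁ * p.2) ^ 2 / 2 * φ p with hAφdef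
  set A1 : ℝ × ℝ → ℝ :=
    fun p => (σ₀ + σ₁ * p.2) * σ₁ * φ p + (σ₀ + σ₁ * p.2) ^ 2 / 2 * φx p with hA1def
  set A2 : ℝ × ℝ → ℝ := fun p => (σ₁ * σ₁ * φ p + (σ₀ + σ₁ * p.2) * σ₁ * φx p)
    + ((σ₀ + σ₁ * p.2) * σ₁ * φx p + (σ₀ + σ₁ * p.2) ^ 2 / 2 * φxx p) with hA2def
  set Bφ : ℝ × ℝ → ℝ := fun p => ((σ₀ + σ₁ * p.2) * σ₁ + μ p.2) * φ p with hBφdef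
  set B1 : ℝ × ℝ → ℝ := fun p => (σ₁ * σ₁ + μ' p.2) * φ p
    + ((σ₀ + σ₁ * p.2) * σ₁ + μ p.2) * φx p with hB1def
  set Ψ : ℝ × ℝ → ℝ := fun p => -(φt p) + (A2 p - B1 p - (r - μ' p.2) * φ p) with hΨdef
  have hAφc : Continuous Aφ := by rw [hAφdef]; fun_prop
  have hA1c : Continuous A1 := by rw [hA1def]; fun_prop
  have hA2c : Continuous A2 := by rw [hA2def]; fun_prop
  have hBφc : Continuous Bφ := by rw [hBφdef]; fun_prop
  have hB1c : Continuous B1 := by rw [hB1def]; fun_prop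
  have hΨc : Continuous Ψ := by rw [hΨdef]; fun_prop
  have hΨ0 : ∀ p ∉ tsupport φ, Ψ p = 0 := by
    intro p hp
    simp [hΨdef, hA2def, hB1def, hφ0 p hp, hφt0 p hp, hφx0 p hp, hφxx0 p hp]
  -- identification of the goal integrand
  have hgoal : ∀ p : ℝ × ℝ,
      (-(deriv (fun t => φ (t, p.2)) p.1)
          + (deriv (fun x => deriv (fun y => (σ₀ + σ₁ * y) ^ 2 / 2 * φ (p.1, y)) x) p.2
             - deriv (fun x => ((σ₀ + σ₁ * x) * σ₁ + μ x) * φ (p.1, x)) p.2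
             - (r - μ' p.2) * φ p)) = Ψ p := by
    intro p
    have d1 : deriv (fun t => φ (t, p.2)) p.1 = φt p := (hφslice1 p.1 p.2).deriv
    have dinner : (fun x => deriv (fun y => (σ₀ + σ₁ * y) ^ 2 / 2 * φ (p.1, y)) x)
        = fun x => A1 (p.1, x) := by
      funext x
      exact ((ha x).mul (hφslice2 p.1 x)).deriv
    have d2 : deriv (fun x => A1 (p.1, x)) p.2 = A2 p := by
      have : HasDerivAt (fun x => A1 (p.1, x)) (A2 p) p.2 :=
        (((ha' p.2).mul (hφslice2 p.1 p.2)).add ((ha p.2).mul (hφxslice2 p.1 p.2)))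
      exact this.deriv
    have d3 : deriv (fun x => ((σ₀ + σ₁ * x) * σ₁ + μ x) * φ (p.1, x)) p.2 = B1 p :=
      ((hb p.2).mul (hφslice2 p.1 p.2)).deriv
    rw [d1, dinner, d2, d3, hΨdef]
  -- u and un are continuous on U
  have huncont : ∀ n, ContinuousOn (un n) U := fun n =>
    stmt7_contOn hU (h_t n) (fun p hp => (h_x n p hp).continuousAt) (hc_t n)
  have hucont : ContinuousOn u U :=
    hconv.continuousOn (Filter.Eventually.of_forall huncont).frequently
  -- smooth cutoff
  obtain ⟨χ, hχs, hχcs, hχU, hχ01, W, hWo, hKW, hχ1⟩ := stmt7_cutoff hφc hU hφU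
  have hχd : Differentiable ℝ χ := hχs.differentiable (by simp)
  set χ1 : ℝ × ℝ → ℝ := fun p => fderiv ℝ χ p (1, 0) with hχ1def
  set χ2 : ℝ × ℝ → ℝ := fun p => fderiv ℝ χ p (0, 1) with hχ2def
  have hχ2s : ContDiff ℝ (∞ : WithTop ℕ∞) χ2 :=
    (hχs.fderiv_right (by norm_num)).clm_apply contDiff_const
  have hχ2d : Differentiable ℝ χ2 := hχ2s.differentiable (by simp)
  set χ22 : ℝ × ℝ → ℝ := fun p => fderiv ℝ χ2 p (0, 1) with hχ22def
  have hχ1c : Continuous χ1 :=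
    ((hχs.fderiv_right (m := ∞) (by norm_num)).clm_apply contDiff_const).continuous
  have hχ2c : Continuous χ2 := hχ2s.continuous
  have hχ22c : Continuous χ22 :=
    ((hχ2s.fderiv_right (m := ∞) (by norm_num)).clm_apply contDiff_const).continuous
  -- χ-data vanishing off tsupport χ
  have hχ0 : ∀ p ∉ tsupport χ, χ p = 0 := fun p hp => image_eq_zero_of_notMem_tsupport hp
  have hχfd0 : ∀ p ∉ tsupport χ, fderiv ℝ χ p = 0 := fun p hp =>
    Function.notMem_support.mp (fun hs => hp (support_fderiv_subset ℝ hs))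
  have hχ10 : ∀ p ∉ tsupport χ, χ1 p = 0 := fun p hp => by simp [hχ1def, hχfd0 p hp]
  have hχ20 : ∀ p ∉ tsupport χ, χ2 p = 0 := fun p hp => by simp [hχ2def, hχfd0 p hp]
  have hχ2ts : tsupport χ2 ⊆ tsupport χ := by
    refine closure_minimal (fun q hq => ?_) (isClosed_tsupport χ)
    by_contra h
    exact hq (hχ20 q h)
  have hχ220 : ∀ p ∉ tsupport χ, χ22 p = 0 := fun p hp => by
    have : fderiv ℝ χ2 p = 0 :=
      Function.notMem_support.mp (fun hs => hp (hχ2ts (support_fderiv_subset ℝ hs)))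
    simp [hχ22def, this]
  -- χ is locally constant 1 on W, so its derivatives vanish there
  have hχ1W : ∀ p ∈ W, χ1 p = 0 := by
    intro p hp
    have h : χ =ᶠ[nhds p] fun _ => (1:ℝ) :=
      Filter.eventuallyEq_of_mem (hWo.mem_nhds hp) fun q hq => hχ1 q hq
    have : fderiv ℝ χ p = fderiv ℝ (fun _ => (1:ℝ)) p := h.fderiv_eq
    simp [hχ1def, this]
  have hχ2W : ∀ p ∈ W, χ2 p = 0 := by
    intro p hp
    have h : χ =ᶠ[nhds p] fun _ => (1:ℝ) :=
      Filter.eventuallyEq_of_mem (hWo.mem_nhds hp) fun q hq => hχ1 q hq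
    have : fderiv ℝ χ p = fderiv ℝ (fun _ => (1:ℝ)) p := h.fderiv_eq
    simp [hχ2def, this]
  have hχ22W : ∀ p ∈ W, χ22 p = 0 := by
    intro p hp
    have h : χ2 =ᶠ[nhds p] fun _ => (0:ℝ) :=
      Filter.eventuallyEq_of_mem (hWo.mem_nhds hp) fun q hq => hχ2W q hq
    have : fderiv ℝ χ2 p = fderiv ℝ (fun _ => (0:ℝ)) p := h.fderiv_eq
    simp [hχ22def, this]
  -- continuity and integrability factories
  have hcontχ : ∀ f : ℝ × ℝ → ℝ, ContinuousOn f U → (∀ q ∉ tsupport χ, f q = 0) →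
      Continuous f := by
    intro f hf h0
    rw [continuous_iff_continuousAt]
    intro p
    by_cases hp : p ∈ U
    · exact hf.continuousAt (hU.mem_nhds hp)
    · have hp' : p ∉ tsupport χ := fun h => hp (hχU h)
      have : f =ᶠ[nhds p] fun _ => (0:ℝ) :=
        Filter.eventuallyEq_of_mem ((isClosed_tsupport χ).isOpen_compl.mem_nhds hp')
          fun q hq => h0 q hq
      exact ContinuousAt.congr (continuousAt_const) this.symm
  have hintχ : ∀ f : ℝ × ℝ → ℝ, Continuous f → (∀ q ∉ tsupport χ, f q = 0) →
      Integrable f := fun f hf h0 =>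
    hf.integrable_of_hasCompactSupport (HasCompactSupport.intro hχcs h0)
  have hcontφK : ∀ f : ℝ × ℝ → ℝ, ContinuousOn f U → (∀ q ∉ tsupport φ, f q = 0) →
      Continuous f := by
    intro f hf h0
    rw [continuous_iff_continuousAt]
    intro p
    by_cases hp : p ∈ U
    · exact hf.continuousAt (hU.mem_nhds hp)
    · have hp' : p ∉ tsupport φ := fun h => hp (hφU h)
      have : f =ᶠ[nhds p] fun _ => (0:ℝ) :=
        Filter.eventuallyEq_of_mem ((isClosed_tsupport φ).isOpen_compl.mem_nhds hp')
          fun q hq => h0 q hq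
      exact ContinuousAt.congr (continuousAt_const) this.symm
  have hintφ : ∀ f : ℝ × ℝ → ℝ, Continuous f → (∀ q ∉ tsupport φ, f q = 0) →
      Integrable f := fun f hf h0 =>
    hf.integrable_of_hasCompactSupport (HasCompactSupport.intro hφc h0)
  -- the localized approximations
  set vn : ℕ → ℝ × ℝ → ℝ := fun n p => un n p * χ p with hvndef
  set v1 : ℕ → ℝ × ℝ → ℝ :=
    fun n => U.indicator (fun p => unt n p * χ p + un n p * χ1 p) with hv1def
  set v2 : ℕ → ℝ × ℝ → ℝ :=
    fun n => U.indicator (fun p => unx n p * χ p + un n p * χ2 p) with hv2def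
  set v3 : ℕ → ℝ × ℝ → ℝ :=
    fun n => U.indicator (fun p =>
      (unxx n p * χ p + unx n p * χ2 p) + (unx n p * χ2 p + un n p * χ22 p)) with hv3def
  -- vanishing off tsupport χ
  have hvn0 : ∀ n, ∀ q ∉ tsupport χ, vn n q = 0 := fun n q hq => by
    simp [hvndef, hχ0 q hq]
  have hv10 : ∀ n, ∀ q ∉ tsupport χ, v1 n q = 0 := by
    intro n q hq
    simp only [hv1def]
    by_cases hqU : q ∈ U
    · rw [Set.indicator_of_mem hqU]
      simp [hχ0 q hq, hχ10 q hq]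
    · exact Set.indicator_of_notMem hqU _
  have hv20 : ∀ n, ∀ q ∉ tsupport χ, v2 n q = 0 := by
    intro n q hq
    simp only [hv2def]
    by_cases hqU : q ∈ U
    · rw [Set.indicator_of_mem hqU]
      simp [hχ0 q hq, hχ20 q hq]
    · exact Set.indicator_of_notMem hqU _
  have hv30 : ∀ n, ∀ q ∉ tsupport χ, v3 n q = 0 := by
    intro n q hq
    simp only [hv3def]
    by_cases hqU : q ∈ U
    · rw [Set.indicator_of_mem hqU]
      simp [hχ0 q hq, hχ20 q hq, hχ220 q hq]
    · exact Set.indicator_of_notMem hqU _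
  -- continuity of the localized approximations
  have hvnc : ∀ n, Continuous (vn n) := by
    intro n
    refine hcontχ _ ((huncont n).mul hχs.continuous.continuousOn) (hvn0 n)
  have hv1c : ∀ n, Continuous (v1 n) := by
    intro n
    refine hcontχ _ ?_ (hv10 n)
    simp only [hv1def]
    refine ContinuousOn.congr ?_ (fun q hq => Set.indicator_of_mem hq _)
    exact ((hc_t n).mul hχs.continuous.continuousOn).add
      ((huncont n).mul hχ1c.continuousOn)
  have hv2c : ∀ n, Continuous (v2 n) := by
    intro n
    refine hcontχ _ ?_ (hv20 n)
    simp only [hv2def]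
    refine ContinuousOn.congr ?_ (fun q hq => Set.indicator_of_mem hq _)
    exact ((hc_x n).mul hχs.continuous.continuousOn).add
      ((huncont n).mul hχ2c.continuousOn)
  have hv3c : ∀ n, Continuous (v3 n) := by
    intro n
    refine hcontχ _ ?_ (hv30 n)
    simp only [hv3def]
    refine ContinuousOn.congr ?_ (fun q hq => Set.indicator_of_mem hq _)
    exact (((hc_xx n).mul hχs.continuous.continuousOn).add
      ((hc_x n).mul hχ2c.continuousOn)).add
      (((hc_x n).mul hχ2c.continuousOn).add ((huncont n).mul hχ22c.continuousOn))
  -- slices of χ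
  have hχslice1 : ∀ t x : ℝ, HasDerivAt (fun s => χ (s, x)) (χ1 (t, x)) t :=
    fun t x => stmt7_slice_fst hχd t x
  have hχslice2 : ∀ t x : ℝ, HasDerivAt (fun y => χ (t, y)) (χ2 (t, x)) x :=
    fun t x => stmt7_slice_snd hχd t x
  have hχ2slice2 : ∀ t x : ℝ, HasDerivAt (fun y => χ2 (t, y)) (χ22 (t, x)) x :=
    fun t x => stmt7_slice_snd hχ2d t x
  have hcomplχ : IsOpen (tsupport χ)ᶜ := (isClosed_tsupport χ).isOpen_compl
  -- line derivatives of the localized approximations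
  have hLvn1 : ∀ n p, HasLineDerivAt ℝ (vn n) (v1 n p) p (1, 0) := by
    intro n p
    by_cases hp : p ∈ U
    · simp only [hv1def, Set.indicator_of_mem hp]
      exact stmt7_lineDeriv_fst ((h_t n p hp).mul (hχslice1 p.1 p.2))
    · have hp' : p ∉ tsupport χ := fun h => hp (hχU h)
      simp only [hv1def, Set.indicator_of_notMem hp]
      exact stmt7_lineDeriv_zero hcomplχ hp' (fun q hq => hvn0 n q hq)
  have hLvn2 : ∀ n p, HasLineDerivAt ℝ (vn n) (v2 n p) p (0, 1) := by
    intro n p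
    by_cases hp : p ∈ U
    · simp only [hv2def, Set.indicator_of_mem hp]
      exact stmt7_lineDeriv_snd ((h_x n p hp).mul (hχslice2 p.1 p.2))
    · have hp' : p ∉ tsupport χ := fun h => hp (hχU h)
      simp only [hv2def, Set.indicator_of_notMem hp]
      exact stmt7_lineDeriv_zero hcomplχ hp' (fun q hq => hvn0 n q hq)
  have hLv22 : ∀ n p, HasLineDerivAt ℝ (v2 n) (v3 n p) p (0, 1) := by
    intro n p
    by_cases hp : p ∈ U
    · have hev : v2 n =ᶠ[nhds p] (fun q => unx n q * χ q + un n q * χ2 q) :=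
        Filter.eventuallyEq_of_mem (hU.mem_nhds hp) fun q hq => by
          simp only [hv2def]; exact Set.indicator_of_mem hq _
      have hd : HasDerivAt
          (fun y => unx n (p.1, y) * χ (p.1, y) + un n (p.1, y) * χ2 (p.1, y))
          ((unxx n p * χ p + unx n p * χ2 p) + (unx n p * χ2 p + un n p * χ22 p)) p.2 :=
        ((h_xx n p hp).mul (hχslice2 p.1 p.2)).add ((h_x n p hp).mul (hχ2slice2 p.1 p.2))
      have hL := stmt7_lineDeriv_snd
        (f := fun q => unx n q * χ q + un n q * χ2 q) (t := p.1) (x := p.2) hd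
      simp only [hv3def, Set.indicator_of_mem hp]
      exact hL.congr_of_eventuallyEq hev
    · have hp' : p ∉ tsupport χ := fun h => hp (hχU h)
      simp only [hv3def, Set.indicator_of_notMem hp]
      exact stmt7_lineDeriv_zero hcomplχ hp' (fun q hq => hv20 n q hq)
  -- line derivatives of the test-function side
  have hLφ1 : ∀ p : ℝ × ℝ, HasLineDerivAt ℝ φ (φt p) p (1, 0) :=
    fun p => stmt7_lineDeriv_fst (hφslice1 p.1 p.2)
  have hLBφ : ∀ p : ℝ × ℝ, HasLineDerivAt ℝ Bφ (B1 p) p (0, 1) :=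
    fun p => stmt7_lineDeriv_snd ((hb p.2).mul (hφslice2 p.1 p.2))
  have hLAφ : ∀ p : ℝ × ℝ, HasLineDerivAt ℝ Aφ (A1 p) p (0, 1) :=
    fun p => stmt7_lineDeriv_snd ((ha p.2).mul (hφslice2 p.1 p.2))
  have hLA1 : ∀ p : ℝ × ℝ, HasLineDerivAt ℝ A1 (A2 p) p (0, 1) :=
    fun p => stmt7_lineDeriv_snd
      (((ha' p.2).mul (hφslice2 p.1 p.2)).add ((ha p.2).mul (hφxslice2 p.1 p.2)))
  -- integration by parts wrapper
  have hIBP : ∀ (f f' g g' : ℝ × ℝ → ℝ) (v : ℝ × ℝ),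
      (∀ p, HasLineDerivAt ℝ f (f' p) p v) → (∀ p, HasLineDerivAt ℝ g (g' p) p v) →
      Integrable (fun p => f' p * g p) → Integrable (fun p => f p * g' p) →
      Integrable (fun p => f p * g p) →
      ∫ p : ℝ × ℝ, f p * g' p = -∫ p : ℝ × ℝ, f' p * g p := by
    intro f f' g g' v hf hg h1 h2 h3
    have key := integral_bilinear_hasLineDerivAt_right_eq_neg_left_of_integrable
      (μ := (volume : Measure (ℝ × ℝ))) (B := ContinuousLinearMap.mul ℝ ℝ)
      (by simpa using h1) (by simpa using h2) (by simpa using h3) (fun x _ => hf x) (fun x _ => hg x)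
    simpa using key
  -- product integrability factory
  have hprod : ∀ (f g : ℝ × ℝ → ℝ), Continuous f → (∀ q ∉ tsupport χ, f q = 0) →
      Continuous g → Integrable (fun p => f p * g p) := fun f g hf h0 hg =>
    hintχ _ (hf.mul hg) (fun q hq => by rw [h0 q hq]; ring)
  -- continuity of g-side functions; χ, φ continuous
  have hφcont : Continuous φ := hφs.continuous
  have hχcont : Continuous χ := hχs.continuous
  -- χ equals 1 (and has vanishing derivatives) on K := tsupport φ
  have hKχ : ∀ p ∈ tsupport φ, χ p = 1 := fun p hp => hχ1 p (hKW hp)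
  have hKχ1 : ∀ p ∈ tsupport φ, χ1 p = 0 := fun p hp => hχ1W p (hKW hp)
  have hKχ2 : ∀ p ∈ tsupport φ, χ2 p = 0 := fun p hp => hχ2W p (hKW hp)
  have hKχ22 : ∀ p ∈ tsupport φ, χ22 p = 0 := fun p hp => hχ22W p (hKW hp)
  -- vanishing of the g-side functions off K
  have hAφ0 : ∀ p ∉ tsupport φ, Aφ p = 0 := fun p hp => by simp [hAφdef, hφ0 p hp]
  have hBφ0 : ∀ p ∉ tsupport φ, Bφ p = 0 := fun p hp => by simp [hBφdef, hφ0 p hp]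
  have hA10 : ∀ p ∉ tsupport φ, A1 p = 0 := fun p hp => by
    simp [hA1def, hφ0 p hp, hφx0 p hp]
  -- the per-n integral inequality
  have key : ∀ n, ∫ p : ℝ × ℝ, -(ℓ p * φ p) ≤ ∫ p : ℝ × ℝ, vn n p * Ψ p := by
    intro n
    -- integrability of everything in sight
    have int_vn_φt := hprod (vn n) φt (hvnc n) (hvn0 n) hφtc
    have int_v1_φ := hprod (v1 n) φ (hv1c n) (hv10 n) hφcont
    have int_vn_φ := hprod (vn n) φ (hvnc n) (hvn0 n) hφcont
    have int_vn_A2 := hprod (vn n) A2 (hvnc n) (hvn0 n) hA2c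
    have int_v2_A1 := hprod (v2 n) A1 (hv2c n) (hv20 n) hA1c
    have int_vn_A1 := hprod (vn n) A1 (hvnc n) (hvn0 n) hA1c
    have int_v3_Aφ := hprod (v3 n) Aφ (hv3c n) (hv30 n) hAφc
    have int_v2_Aφ := hprod (v2 n) Aφ (hv2c n) (hv20 n) hAφc
    have int_vn_B1 := hprod (vn n) B1 (hvnc n) (hvn0 n) hB1c
    have int_v2_Bφ := hprod (v2 n) Bφ (hv2c n) (hv20 n) hBφc
    have int_vn_Bφ := hprod (vn n) Bφ (hvnc n) (hvn0 n) hBφc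
    have hcφc : Continuous (fun p : ℝ × ℝ => (r - μ' p.2) * φ p) := by fun_prop
    have int_vn_cφ := hprod (vn n) (fun p => (r - μ' p.2) * φ p) (hvnc n) (hvn0 n) hcφc
    have int_unt_φ : Integrable (fun p : ℝ × ℝ => unt n p * φ p) := by
      refine hintφ _ (hcontφK _ ((hc_t n).mul hφcont.continuousOn) ?_) ?_ <;>
        exact fun q hq => by rw [hφ0 q hq]; ring
    have int_unxx_Aφ : Integrable (fun p : ℝ × ℝ => unxx n p * Aφ p) := by
      refine hintφ _ (hcontφK _ ((hc_xx n).mul hAφc.continuousOn) ?_) ?_ <;>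
        exact fun q hq => by rw [hAφ0 q hq]; ring
    have int_unx_Bφ : Integrable (fun p : ℝ × ℝ => unx n p * Bφ p) := by
      refine hintφ _ (hcontφK _ ((hc_x n).mul hBφc.continuousOn) ?_) ?_ <;>
        exact fun q hq => by rw [hBφ0 q hq]; ring
    have int_lφ : Integrable (fun p : ℝ × ℝ => -(ℓ p * φ p)) := by
      refine hintφ _ (hcontφK _ (hℓ.mul hφcont.continuousOn).neg ?_) ?_ <;>
        exact fun q hq => by rw [hφ0 q hq]; ring
    -- the three integrations by parts
    have E1 : ∫ p : ℝ × ℝ, vn n p * φt p = -∫ p : ℝ × ℝ, v1 n p * φ p :=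
      hIBP (vn n) (v1 n) φ φt (1, 0) (hLvn1 n) hLφ1 int_v1_φ int_vn_φt int_vn_φ
    have E2a : ∫ p : ℝ × ℝ, vn n p * A2 p = -∫ p : ℝ × ℝ, v2 n p * A1 p :=
      hIBP (vn n) (v2 n) A1 A2 (0, 1) (hLvn2 n) hLA1 int_v2_A1 int_vn_A2 int_vn_A1
    have E2b : ∫ p : ℝ × ℝ, v2 n p * A1 p = -∫ p : ℝ × ℝ, v3 n p * Aφ p :=
      hIBP (v2 n) (v3 n) Aφ A1 (0, 1) (hLv22 n) hLAφ int_v3_Aφ int_v2_A1 int_v2_Aφ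
    have E3 : ∫ p : ℝ × ℝ, vn n p * B1 p = -∫ p : ℝ × ℝ, v2 n p * Bφ p :=
      hIBP (vn n) (v2 n) Bφ B1 (0, 1) (hLvn2 n) hLBφ int_v2_Bφ int_vn_B1 int_vn_Bφ
    -- identification with the original functions on the support of φ
    have e1 : ∫ p : ℝ × ℝ, v1 n p * φ p = ∫ p : ℝ × ℝ, unt n p * φ p := by
      refine congrArg _ (funext fun p => ?_)
      by_cases hp : p ∈ tsupport φ
      · simp only [hv1def, Set.indicator_of_mem (hφU hp), hKχ p hp, hKχ1 p hp]
        ring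
      · rw [hφ0 p hp]; ring
    have e2 : ∫ p : ℝ × ℝ, v3 n p * Aφ p = ∫ p : ℝ × ℝ, unxx n p * Aφ p := by
      refine congrArg _ (funext fun p => ?_)
      by_cases hp : p ∈ tsupport φ
      · simp only [hv3def, Set.indicator_of_mem (hφU hp), hKχ p hp, hKχ2 p hp, hKχ22 p hp]
        ring
      · rw [hAφ0 p hp]; ring
    have e3 : ∫ p : ℝ × ℝ, v2 n p * Bφ p = ∫ p : ℝ × ℝ, unx n p * Bφ p := by
      refine congrArg _ (funext fun p => ?_)
      by_cases hp : p ∈ tsupport φ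
      · simp only [hv2def, Set.indicator_of_mem (hφU hp), hKχ p hp, hKχ2 p hp]
        ring
      · rw [hBφ0 p hp]; ring
    -- split the integral of vn * Ψ
    have hsplit : (fun p : ℝ × ℝ => vn n p * Ψ p) = fun p =>
        -(vn n p * φt p) + ((vn n p * A2 p - vn n p * B1 p)
          - vn n p * ((r - μ' p.2) * φ p)) := funext fun p => by
      simp only [hΨdef]; ring
    have intA : Integrable (fun p : ℝ × ℝ => -(vn n p * φt p)) := int_vn_φt.neg
    have intB1' : Integrable (fun p : ℝ × ℝ => vn n p * A2 p - vn n p * B1 p) :=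
      int_vn_A2.sub int_vn_B1
    have intB : Integrable (fun p : ℝ × ℝ => (vn n p * A2 p - vn n p * B1 p)
        - vn n p * ((r - μ' p.2) * φ p)) := intB1'.sub int_vn_cφ
    have hSn : (∫ p : ℝ × ℝ, vn n p * Ψ p)
        = -(∫ p : ℝ × ℝ, vn n p * φt p) + (((∫ p : ℝ × ℝ, vn n p * A2 p)
          - (∫ p : ℝ × ℝ, vn n p * B1 p)) - ∫ p : ℝ × ℝ, vn n p * ((r - μ' p.2) * φ p)) := by
      rw [hsplit]
      rw [integral_add intA intB, integral_sub intB1' int_vn_cφ,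
        integral_sub int_vn_A2 int_vn_B1, integral_neg]
    -- the comparison integrand
    have intC1 : Integrable (fun p : ℝ × ℝ => unt n p * φ p + unxx n p * Aφ p) :=
      int_unt_φ.add int_unxx_Aφ
    have intC2 : Integrable (fun p : ℝ × ℝ =>
        unt n p * φ p + unxx n p * Aφ p + unx n p * Bφ p) := intC1.add int_unx_Bφ
    have hFn : (∫ p : ℝ × ℝ, (unt n p * φ p + unxx n p * Aφ p + unx n p * Bφ p
          - vn n p * ((r - μ' p.2) * φ p)))
        = (∫ p : ℝ × ℝ, unt n p * φ p) + (∫ p : ℝ × ℝ, unxx n p * Aφ p)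
          + (∫ p : ℝ × ℝ, unx n p * Bφ p) - ∫ p : ℝ × ℝ, vn n p * ((r - μ' p.2) * φ p) := by
      rw [integral_sub intC2 int_vn_cφ, integral_add intC1 int_unx_Bφ,
        integral_add int_unt_φ int_unxx_Aφ]
    have hmono : ∫ p : ℝ × ℝ, -(ℓ p * φ p)
        ≤ ∫ p : ℝ × ℝ, (unt n p * φ p + unxx n p * Aφ p + unx n p * Bφ p
          - vn n p * ((r - μ' p.2) * φ p)) := by
      refine integral_mono int_lφ ?_ ?_
      · exact ((int_unt_φ.add int_unxx_Aφ).add int_unx_Bφ).sub int_vn_cφ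
      · intro p
        by_cases hp : p ∈ tsupport φ
        · have hpU := hφU hp
          have hχp := hKχ p hp
          have h2 : unt n p * φ p + unxx n p * Aφ p + unx n p * Bφ p
              - vn n p * ((r - μ' p.2) * φ p)
              = (unt n p + (σ₀ + σ₁ * p.2) ^ 2 / 2 * unxx n p
                + ((σ₀ + σ₁ * p.2) * σ₁ + μ p.2) * unx n p
                - (r - μ' p.2) * un n p) * φ p := by
            simp only [hAφdef, hBφdef, hvndef, hχp, mul_one]
            ring
          have h3 := mul_le_mul_of_nonneg_right (hineq n p hpU) (hφpos p)
          simp only [h2]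
          linarith
        · have h0 := hφ0 p hp
          simp only [Pi.le_def, hAφdef, hBφdef, h0, mul_zero, zero_mul, neg_zero,
            add_zero, sub_zero, zero_add]
          simp
    calc ∫ p : ℝ × ℝ, -(ℓ p * φ p)
        ≤ ∫ p : ℝ × ℝ, (unt n p * φ p + unxx n p * Aφ p + unx n p * Bφ p
          - vn n p * ((r - μ' p.2) * φ p)) := hmono
      _ = ∫ p : ℝ × ℝ, vn n p * Ψ p := by
          rw [hFn, hSn]
          linarith [E1, E2a, E2b, E3, e1, e2, e3]
  -- the limit integrand u * Ψ is integrable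
  have huΨ0 : ∀ q ∉ tsupport φ, u q * Ψ q = 0 := fun q hq => by rw [hΨ0 q hq]; ring
  have huΨc : Continuous (fun p => u p * Ψ p) :=
    hcontφK _ (hucont.mul hΨc.continuousOn) huΨ0
  have int_uΨ : Integrable (fun p : ℝ × ℝ => u p * Ψ p) := hintφ _ huΨc huΨ0
  -- uniform convergence on the support of φ
  have hTU : TendstoUniformlyOn un u Filter.atTop (tsupport φ) :=
    (tendstoLocallyUniformlyOn_iff_forall_isCompact hU).mp hconv (tsupport φ) hφU hφc
  obtain ⟨C, hC⟩ := hφc.exists_bound_of_continuousOn (hucont.mono hφU)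
  set D : ℝ := max C 0 with hDdef
  have hD : ∀ q ∈ tsupport φ, ‖u q‖ ≤ D := fun q hq => (hC q hq).trans (le_max_left _ _)
  have hD0 : (0:ℝ) ≤ D := le_max_right _ _
  -- dominated convergence
  have hbound_int : Integrable (fun p : ℝ × ℝ => (D + 1) * ‖Ψ p‖) := by
    refine (hintφ _ (by fun_prop) ?_).const_mul _
    exact fun q hq => by rw [hΨ0 q hq]; simp
  have hptwise : ∀ p : ℝ × ℝ, Filter.Tendsto (fun n => vn n p * Ψ p)
      Filter.atTop (nhds (u p * Ψ p)) := by
    intro p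
    by_cases hp : p ∈ tsupport φ
    · have hχp := hKχ p hp
      have h1 : Filter.Tendsto (fun n => un n p) Filter.atTop (nhds (u p)) :=
        hconv.tendsto_at (hφU hp)
      have h2 := h1.mul_const (Ψ p)
      refine h2.congr fun n => ?_
      simp [hvndef, hχp]
    · have h0 : Ψ p = 0 := hΨ0 p hp
      simp only [h0, mul_zero]
      exact tendsto_const_nhds
  have hboundev : ∀ᶠ n in Filter.atTop, ∀ᵐ p : ℝ × ℝ, ‖vn n p * Ψ p‖ ≤ (D + 1) * ‖Ψ p‖ := by
    have hev := Metric.tendstoUniformlyOn_iff.mp hTU 1 one_pos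
    filter_upwards [hev] with n hn
    refine Filter.Eventually.of_forall fun p => ?_
    by_cases hp : p ∈ tsupport φ
    · have h1 : ‖un n p‖ ≤ D + 1 := by
        have := hn p hp
        rw [dist_eq_norm] at this
        calc ‖un n p‖ = ‖u p - (u p - un n p)‖ := by ring_nf
          _ ≤ ‖u p‖ + ‖u p - un n p‖ := norm_sub_le _ _
          _ ≤ D + 1 := add_le_add (hD p hp) this.le
      have h2 : ‖χ p‖ ≤ 1 := by
        rw [Real.norm_eq_abs, abs_le]
        exact ⟨by linarith [(hχ01 p).1], (hχ01 p).2⟩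
      calc ‖vn n p * Ψ p‖ = ‖un n p‖ * ‖χ p‖ * ‖Ψ p‖ := by
            simp [hvndef, abs_mul]
        _ ≤ (D + 1) * 1 * ‖Ψ p‖ := by
            refine mul_le_mul_of_nonneg_right ?_ (norm_nonneg _)
            exact mul_le_mul h1 h2 (norm_nonneg _) (by linarith)
        _ = (D + 1) * ‖Ψ p‖ := by ring
    · rw [hΨ0 p hp]
      simp only [mul_zero, norm_zero, norm_zero]
      exact le_rfl
  have hmeas : ∀ᶠ n in Filter.atTop,
      AEStronglyMeasurable (fun p : ℝ × ℝ => vn n p * Ψ p) volume :=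
    Filter.Eventually.of_forall fun n => ((hvnc n).mul hΨc).aestronglyMeasurable
  have hTend : Filter.Tendsto (fun n => ∫ p : ℝ × ℝ, vn n p * Ψ p)
      Filter.atTop (nhds (∫ p : ℝ × ℝ, u p * Ψ p)) := by
    refine tendsto_integral_filter_of_dominated_convergence _ hmeas hboundev hbound_int ?_
    exact Filter.Eventually.of_forall fun p => hptwise p
  -- conclusion
  have hfinal : (∫ p : ℝ × ℝ, -(ℓ p * φ p)) ≤ ∫ p : ℝ × ℝ, u p * Ψ p :=
    ge_of_tendsto hTend (Filter.Eventually.of_forall key)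
  have hfun : (fun p : ℝ × ℝ => u p *
        (-(deriv (fun t => φ (t, p.2)) p.1)
          + (deriv (fun x => deriv (fun y => (σ₀ + σ₁ * y) ^ 2 / 2 * φ (p.1, y)) x) p.2
             - deriv (fun x => ((σ₀ + σ₁ * x) * σ₁ + μ x) * φ (p.1, x)) p.2
             - (r - μ' p.2) * φ p))) = fun p => u p * Ψ p :=
    funext fun p => by rw [hgoal p]
  rw [show -∫ p : ℝ × ℝ, ℓ p * φ p = ∫ p : ℝ × ℝ, -(ℓ p * φ p) from (integral_neg _).symm]
  rw [hfun]
  exact hfinal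
end

section
/- Under these hypotheses the stopping boundary a is left-continuous at t₀, i.e. lim_{t↑t₀} a(t) = a(t₀). -/
/-!
Suppose `a t ≤ y < a t₀` for all `t < t₀`. Then for `[x₁, x₂] ⊆ (y, a t₀)` and `t < t₀` the
strip `{t} × [x₁, x₂]` lies in the continuation region, where `v - g` is non-increasing in `t`
and `v ≥ g`; so the parabolic inequality becomes `0 ≤ Θ + L v` with `L = (σ₀²/2) ∂ₓₓ + μ ∂ₓ`.
Testing against a bump `φ ≥ 0` vanishing to second order at `x₁, x₂` and integrating by parts
twice gives `0 ≤ ∫ Θ(t, ·) φ + v(t, ·) L*φ`, which is continuous in `t` up to `t₀`. At `t₀` the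
strip lies in the stopping region, so `v(t₀, ·) = g t₀` there and, since `∫ L*φ = 0`, the limit
is `∫ Θ(t₀, ·) φ`. This is negative once the strip is placed close enough to `a t₀`, because
`Θ(t₀, a t₀) ≤ 0` and `∂ₓh(t₀, a t₀) > 0`.
-/

open Set Filter Topology Interval intervalIntegral
open MeasureTheory (volume ae_of_all)

theorem integral_deriv_mul_eq_neg_of_eq_zero {a b : ℝ} {u u' v v' : ℝ → ℝ}
    (hu : ∀ x ∈ [[a, b]], HasDerivAt u (u' x) x) (hv : ∀ x ∈ [[a, b]], HasDerivAt v (v' x) x)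
    (hu' : IntervalIntegrable u' volume a b)
    (hv' : IntervalIntegrable v' volume a b) (ha : v a = 0) (hb : v b = 0) :
    ∫ x in a..b, u' x * v x = -∫ x in a..b, u x * v' x := by
  rw [integral_mul_deriv_eq_deriv_mul hu hv hu' hv', ha, hb]
  ring

theorem integral_mul_adjoint_eq {a b σ : ℝ} {u u' u'' φ φ' φ'' μ μ' : ℝ → ℝ}
    (hu : ∀ x ∈ [[a, b]], HasDerivAt u (u' x) x)
    (hu' : ∀ x ∈ [[a, b]], HasDerivAt u' (u'' x) x) (hu''c : ContinuousOn u'' [[a, b]])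
    (hφ : ∀ x, HasDerivAt φ (φ' x) x) (hφ' : ∀ x, HasDerivAt φ' (φ'' x) x)
    (hφ''c : Continuous φ'') (hμ : ∀ x, HasDerivAt μ (μ' x) x) (hμ'c : Continuous μ')
    (hφa : φ a = 0) (hφb : φ b = 0) (hφ'a : φ' a = 0) (hφ'b : φ' b = 0) :
    ∫ x in a..b, u x * (σ * φ'' x - (μ' x * φ x + μ x * φ' x)) =
      ∫ x in a..b, (σ * u'' x + μ x * u' x) * φ x := by
  have hφc : Continuous φ := continuous_iff_continuousAt.2 fun x => (hφ x).continuousAt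
  have hφ'c : Continuous φ' := continuous_iff_continuousAt.2 fun x => (hφ' x).continuousAt
  have hμc : Continuous μ := continuous_iff_continuousAt.2 fun x => (hμ x).continuousAt
  have huc : ContinuousOn u [[a, b]] := fun x hx => (hu x hx).continuousAt.continuousWithinAt
  have hu'c : ContinuousOn u' [[a, b]] := fun x hx => (hu' x hx).continuousAt.continuousWithinAt
  have hμφ : ∀ x, HasDerivAt (fun x => μ x * φ x) (μ' x * φ x + μ x * φ' x) x :=
    fun x => (hμ x).mul (hφ x)
  calc ∫ x in a..b, u x * (σ * φ'' x - (μ' x * φ x + μ x * φ' x))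
      = σ * (∫ x in a..b, u x * φ'' x) - ∫ x in a..b, u x * (μ' x * φ x + μ x * φ' x) := by
        simp only [mul_sub, mul_left_comm _ σ]
        rw [integral_sub, integral_const_mul]
        · exact ((huc.mul hφ''c.continuousOn).const_mul σ).intervalIntegrable
        · exact (huc.mul (by fun_prop : Continuous _).continuousOn).intervalIntegrable
    _ = σ * (∫ x in a..b, u'' x * φ x) + ∫ x in a..b, u' x * (μ x * φ x) := by
        rw [integral_deriv_mul_eq_neg_of_eq_zero hu' (fun x _ => hφ x) (hu''c.intervalIntegrable)
            (hφ'c.intervalIntegrable a b) hφa hφb,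
          integral_deriv_mul_eq_neg_of_eq_zero hu (fun x _ => hφ' x) hu'c.intervalIntegrable
            (hφ''c.intervalIntegrable a b) hφ'a hφ'b,
          integral_deriv_mul_eq_neg_of_eq_zero hu (fun x _ => hμφ x) hu'c.intervalIntegrable
            ((by fun_prop : Continuous _).intervalIntegrable a b) (by simp [hφa]) (by simp [hφb])]
        ring
    _ = ∫ x in a..b, (σ * u'' x + μ x * u' x) * φ x := by
        rw [← integral_const_mul, ← integral_add]
        · congr 1; ext x; ring
        · exact ((hu''c.mul hφc.continuousOn).const_mul σ).intervalIntegrable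
        · exact (hu'c.mul (hμc.mul hφc).continuousOn).intervalIntegrable

theorem MonotoneOn.tendsto_nhdsLT_of_forall_exists_lt {α β : Type*} [LinearOrder α]
    [TopologicalSpace α] [OrderTopology α] [LinearOrder β] [TopologicalSpace β] [OrderTopology β]
    {f : α → β} {s t : α} (hf : MonotoneOn f (Ioc s t)) (hst : s < t)
    (h : ∀ y < f t, ∃ τ ∈ Ioo s t, y < f τ) : Tendsto f (𝓝[<] t) (𝓝 (f t)) := by
  refine tendsto_order.2 ⟨fun y hy => ?_, fun y hy => ?_⟩
  · obtain ⟨τ, hτ, hyτ⟩ := h y hy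
    filter_upwards [Ioo_mem_nhdsLT hτ.2] with σ hσ
    exact hyτ.trans_le (hf (Ioo_subset_Ioc_self hτ) ⟨hτ.1.trans hσ.1, hσ.2.le⟩ hσ.1.le)
  · filter_upwards [Ioo_mem_nhdsLT hst] with σ hσ
    exact (hf (Ioo_subset_Ioc_self hσ) (right_mem_Ioc.2 hst) hσ.2.le).trans_lt hy

theorem HasDerivAt.nonpos_of_antitoneOn {f : ℝ → ℝ} {f' x : ℝ} {s : Set ℝ}
    (hf : HasDerivAt f f' x) (hs : s ∈ 𝓝 x) (hanti : AntitoneOn f s) : f' ≤ 0 :=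
  hf.hasDerivWithinAt.nonpos_of_antitoneOn
    (((PerfectSpace.univ_preperfect x trivial).nhds_inter hs).mono (by simp)) hanti

theorem HasDerivAt.eventually_nhdsLT_lt {f : ℝ → ℝ} {f' x : ℝ} (hf : HasDerivAt f f' x)
    (hf' : 0 < f') : ∀ᶠ y in 𝓝[<] x, f y < f x := by
  have hslope := (hasDerivAt_iff_tendsto_slope.1 hf).mono_left (nhdsLT_le_nhdsNE x)
  filter_upwards [hslope.eventually (eventually_gt_nhds hf'), self_mem_nhdsWithin] with y hy hyx
  exact (slope_pos_iff_gt hyx).1 hy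

theorem ContinuousOn.continuousWithinAt_intervalIntegral {X E : Type*} [TopologicalSpace X]
    [FirstCountableTopology X] [NormedAddCommGroup E] [NormedSpace ℝ E] {F : X × ℝ → E}
    {s : Set X} {a b : ℝ} {t : X} (hs : IsCompact s) (hF : ContinuousOn F (s ×ˢ [[a, b]]))
    (ht : t ∈ s) : ContinuousWithinAt (fun τ => ∫ x in a..b, F (τ, x)) s t := by
  obtain ⟨M, hM⟩ := (hs.prod isCompact_uIcc).exists_bound_of_continuousOn hF
  apply continuousWithinAt_of_dominated_interval (bound := fun _ => M)
  · filter_upwards [self_mem_nhdsWithin] with τ hτ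
    refine ContinuousOn.aestronglyMeasurable ?_ measurableSet_uIoc
    exact hF.comp (by fun_prop) fun x hx => ⟨hτ, uIoc_subset_uIcc hx⟩
  · filter_upwards [self_mem_nhdsWithin] with τ hτ
    exact ae_of_all _ fun x hx => hM _ ⟨hτ, uIoc_subset_uIcc hx⟩
  · exact intervalIntegrable_const
  · refine ae_of_all _ fun x hx => (hF _ ⟨ht, uIoc_subset_uIcc hx⟩).comp (by fun_prop)
      fun τ hτ => ⟨hτ, uIoc_subset_uIcc hx⟩

theorem integral_nonneg_of_forall_lt {F : ℝ × ℝ → ℝ} {s t₀ a b : ℝ} (hst : s < t₀)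
    (hF : ContinuousOn F (Icc s t₀ ×ˢ [[a, b]]))
    (h : ∀ t ∈ Ioo s t₀, 0 ≤ ∫ x in a..b, F (t, x)) : 0 ≤ ∫ x in a..b, F (t₀, x) :=
  ge_of_tendsto ((hF.continuousWithinAt_intervalIntegral isCompact_Icc
      (right_mem_Icc.2 hst.le)).mono_of_mem_nhdsWithin (Icc_mem_nhdsLT hst))
    (eventually_of_mem (Ioo_mem_nhdsLT hst) h)

def quarticBump (x₁ x₂ x : ℝ) : ℝ := (x - x₁) ^ 2 * (x₂ - x) ^ 2

def quarticBumpDeriv (x₁ x₂ x : ℝ) : ℝ := 2 * (x - x₁) * (x₂ - x) ^ 2 - 2 * (x - x₁) ^ 2 * (x₂ - x)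

def quarticBumpDeriv2 (x₁ x₂ x : ℝ) : ℝ :=
  2 * (x₂ - x) ^ 2 - 8 * (x - x₁) * (x₂ - x) + 2 * (x - x₁) ^ 2

/-- The formal adjoint `σ φ'' - (μ φ)'` of the generator `σ ∂ₓₓ + μ ∂ₓ`, applied to the quartic
bump `φ`; `μ'` stands for the derivative of `μ`. -/
def quarticBumpAdjoint (σ : ℝ) (μ μ' : ℝ → ℝ) (x₁ x₂ x : ℝ) : ℝ :=
  σ * quarticBumpDeriv2 x₁ x₂ x - (μ' x * quarticBump x₁ x₂ x + μ x * quarticBumpDeriv x₁ x₂ x)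

section QuarticBump

variable {x₁ x₂ : ℝ}

theorem hasDerivAt_quarticBump (x : ℝ) :
    HasDerivAt (quarticBump x₁ x₂) (quarticBumpDeriv x₁ x₂ x) x := by
  have := (((hasDerivAt_id x).sub_const x₁).pow 2).mul (((hasDerivAt_id x).const_sub x₂).pow 2)
  refine this.congr_deriv ?_
  simp only [quarticBumpDeriv, id, Pi.pow_apply]
  ring

theorem hasDerivAt_quarticBumpDeriv (x : ℝ) :
    HasDerivAt (quarticBumpDeriv x₁ x₂) (quarticBumpDeriv2 x₁ x₂ x) x := by
  have hl := (hasDerivAt_id x).sub_const x₁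
  have hr := (hasDerivAt_id x).const_sub x₂
  have := ((hl.const_mul 2).mul (hr.pow 2)).sub (((hl.pow 2).const_mul 2).mul hr)
  refine this.congr_deriv ?_
  simp only [quarticBumpDeriv2, id, Pi.pow_apply]
  ring

theorem continuous_quarticBumpDeriv2 : Continuous (quarticBumpDeriv2 x₁ x₂) := by
  unfold quarticBumpDeriv2; fun_prop

theorem quarticBump_nonneg (x : ℝ) : 0 ≤ quarticBump x₁ x₂ x := by
  unfold quarticBump; positivity

theorem quarticBump_pos {x : ℝ} (hx : x ∈ Ioo x₁ x₂) : 0 < quarticBump x₁ x₂ x :=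
  mul_pos (pow_pos (sub_pos.2 hx.1) 2) (pow_pos (sub_pos.2 hx.2) 2)

variable {σ : ℝ} {μ μ' u u' u'' θ : ℝ → ℝ}

theorem integral_mul_quarticBumpAdjoint_eq (hu : ∀ x ∈ [[x₁, x₂]], HasDerivAt u (u' x) x)
    (hu' : ∀ x ∈ [[x₁, x₂]], HasDerivAt u' (u'' x) x) (hu''c : ContinuousOn u'' [[x₁, x₂]])
    (hμ : ∀ x, HasDerivAt μ (μ' x) x) (hμ'c : Continuous μ') :
    ∫ x in x₁..x₂, u x * quarticBumpAdjoint σ μ μ' x₁ x₂ x =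
      ∫ x in x₁..x₂, (σ * u'' x + μ x * u' x) * quarticBump x₁ x₂ x :=
  integral_mul_adjoint_eq hu hu' hu''c hasDerivAt_quarticBump hasDerivAt_quarticBumpDeriv
    continuous_quarticBumpDeriv2 hμ hμ'c (by simp [quarticBump]) (by simp [quarticBump])
    (by simp [quarticBumpDeriv]) (by simp [quarticBumpDeriv])

theorem continuous_quarticBumpAdjoint (hμ : ∀ x, HasDerivAt μ (μ' x) x) (hμ'c : Continuous μ') :
    Continuous (quarticBumpAdjoint σ μ μ' x₁ x₂) := by
  have hμc : Continuous μ := continuous_iff_continuousAt.2 fun x => (hμ x).continuousAt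
  unfold quarticBumpAdjoint quarticBumpDeriv2 quarticBump quarticBumpDeriv
  fun_prop

theorem integral_const_mul_quarticBumpAdjoint_eq_zero (c : ℝ) (hμ : ∀ x, HasDerivAt μ (μ' x) x)
    (hμ'c : Continuous μ') : ∫ x in x₁..x₂, c * quarticBumpAdjoint σ μ μ' x₁ x₂ x = 0 := by
  simpa using integral_mul_quarticBumpAdjoint_eq (σ := σ) (u := fun _ => c) (u' := 0) (u'' := 0)
    (fun x _ => hasDerivAt_const x c) (fun x _ => hasDerivAt_const x 0) continuousOn_const hμ hμ'c

theorem integral_mul_quarticBump_add_mul_quarticBumpAdjoint_nonneg (h12 : x₁ ≤ x₂)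
    (hu : ∀ x ∈ [[x₁, x₂]], HasDerivAt u (u' x) x)
    (hu' : ∀ x ∈ [[x₁, x₂]], HasDerivAt u' (u'' x) x) (hu''c : ContinuousOn u'' [[x₁, x₂]])
    (hμ : ∀ x, HasDerivAt μ (μ' x) x) (hμ'c : Continuous μ') (hθ : ContinuousOn θ [[x₁, x₂]])
    (h : ∀ x ∈ [[x₁, x₂]], 0 ≤ θ x + σ * u'' x + μ x * u' x) :
    0 ≤ ∫ x in x₁..x₂, θ x * quarticBump x₁ x₂ x + u x * quarticBumpAdjoint σ μ μ' x₁ x₂ x := by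
  have hμc : Continuous μ := continuous_iff_continuousAt.2 fun x => (hμ x).continuousAt
  have huc : ContinuousOn u [[x₁, x₂]] := fun x hx => (hu x hx).continuousAt.continuousWithinAt
  have hu'c : ContinuousOn u' [[x₁, x₂]] :=
    fun x hx => (hu' x hx).continuousAt.continuousWithinAt
  have hφc : Continuous (quarticBump x₁ x₂) := by unfold quarticBump; fun_prop
  have hθφ : IntervalIntegrable (fun x => θ x * quarticBump x₁ x₂ x) volume x₁ x₂ :=
    (hθ.mul hφc.continuousOn).intervalIntegrable
  have huψ : IntervalIntegrable (fun x => u x * quarticBumpAdjoint σ μ μ' x₁ x₂ x) volume x₁ x₂ :=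
    (huc.mul (continuous_quarticBumpAdjoint hμ hμ'c).continuousOn).intervalIntegrable
  have hLuφ : IntervalIntegrable (fun x => (σ * u'' x + μ x * u' x) * quarticBump x₁ x₂ x)
      volume x₁ x₂ :=
    (((hu''c.const_smul σ).add (hμc.continuousOn.mul hu'c)).mul hφc.continuousOn).intervalIntegrable
  rw [integral_add hθφ huψ, integral_mul_quarticBumpAdjoint_eq hu hu' hu''c hμ hμ'c,
    ← integral_add hθφ hLuφ]
  refine integral_nonneg h12 fun x hx => ?_
  have := h x (Icc_subset_uIcc hx)
  nlinarith [quarticBump_nonneg (x₁ := x₁) (x₂ := x₂) x]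

theorem integral_mul_quarticBump_add_const_mul_quarticBumpAdjoint_neg (h12 : x₁ < x₂) (c : ℝ)
    (hμ : ∀ x, HasDerivAt μ (μ' x) x) (hμ'c : Continuous μ') (hθ : ContinuousOn θ [[x₁, x₂]])
    (hneg : ∀ x ∈ Ioo x₁ x₂, θ x < 0) :
    ∫ x in x₁..x₂, θ x * quarticBump x₁ x₂ x + c * quarticBumpAdjoint σ μ μ' x₁ x₂ x < 0 := by
  have hθφ : ContinuousOn (fun x => θ x * quarticBump x₁ x₂ x) [[x₁, x₂]] :=
    hθ.mul (by unfold quarticBump; fun_prop)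
  rw [integral_add hθφ.intervalIntegrable
      (((continuous_quarticBumpAdjoint hμ hμ'c).const_mul c).intervalIntegrable _ _),
    integral_const_mul_quarticBumpAdjoint_eq_zero c hμ hμ'c, add_zero, ← neg_pos, ← integral_neg]
  exact intervalIntegral_pos_of_pos_on hθφ.neg.intervalIntegrable
    (fun x hx => neg_pos.2 (mul_neg_of_neg_of_pos (hneg x hx) (quarticBump_pos hx))) h12

end QuarticBump

theorem source_add_generator_nonneg {T r σ : ℝ} {μ g g' : ℝ → ℝ}
    {h v vt vx vxx : ℝ × ℝ → ℝ} {C : Set (ℝ × ℝ)} (hr : 0 ≤ r)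
    (hg : ∀ t, HasDerivAt g (g' t) t) (hCT : ∀ p ∈ C, p.1 ∈ Ioo 0 T)
    (hgv : ∀ t ∈ Icc 0 T, ∀ x, g t ≤ v (t, x))
    (hanti : ∀ x, ∀ s ∈ Icc 0 T, ∀ t ∈ Icc 0 T, s ≤ t → v (t, x) - g t ≤ v (s, x) - g s)
    (hvt : ∀ p ∈ C, HasDerivAt (fun t => v (t, p.2)) (vt p) p.1)
    (hpde : ∀ p ∈ C, 0 ≤ vt p + σ * vxx p + μ p.2 * vx p - r * v p + h p) :
    ∀ p ∈ C, 0 ≤ g' p.1 - r * g p.1 + h p + σ * vxx p + μ p.2 * vx p := by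
  rintro ⟨t, x⟩ hp
  have ht := hCT _ hp
  have hvt_le : vt (t, x) - g' t ≤ 0 :=
    ((hvt _ hp).sub (hg t)).nonpos_of_antitoneOn (Icc_mem_nhds ht.1 ht.2)
      fun s hs s' hs' hss' => hanti x s hs s' hs' hss'
  nlinarith [hpde _ hp, mul_le_mul_of_nonneg_left (hgv t (Ioo_subset_Icc_self ht) x) hr]

theorem stmt_8_general (T t₀ σ₀ r : ℝ) (ht₀ : t₀ ∈ Set.Ioo 0 T)
    (hr : 0 ≤ r)
    (μ : ℝ → ℝ) (hμ : ContDiff ℝ 1 μ)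
    (g g' : ℝ → ℝ) (hg : ∀ t, HasDerivAt g (g' t) t) (hg' : Continuous g')
    (h hx : ℝ × ℝ → ℝ)
    (hh : ContinuousOn h (Set.Icc 0 T ×ˢ Set.univ))
    (hhx : ∀ p ∈ (Set.Icc 0 T ×ˢ Set.univ : Set (ℝ × ℝ)),
      HasDerivAt (fun x => h (p.1, x)) (hx p) p.2)
    (v : ℝ × ℝ → ℝ) (hv : ContinuousOn v (Set.Icc 0 T ×ˢ Set.univ))
    (a : ℝ → ℝ) (ha : MonotoneOn a (Set.Ico 0 T))
    (h1 : ∀ t ∈ Set.Ico (0:ℝ) T, ∀ x ≤ a t, v (t, x) = g t)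
    (h2 : ∀ t ∈ Set.Icc (0:ℝ) T, ∀ x : ℝ, g t ≤ v (t, x))
    (h3 : ∀ x : ℝ, ∀ s ∈ Set.Icc (0:ℝ) T, ∀ t ∈ Set.Icc (0:ℝ) T, s ≤ t →
      v (t, x) - g t ≤ v (s, x) - g s)
    (C : Set (ℝ × ℝ)) (hC : C = {p : ℝ × ℝ | p.1 ∈ Set.Ioo 0 T ∧ a p.1 < p.2})
    (vt vx vxx : ℝ × ℝ → ℝ)
    (hvt : ∀ p ∈ C, HasDerivAt (fun t => v (t, p.2)) (vt p) p.1)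
    (hvx : ∀ p ∈ C, HasDerivAt (fun x => v (p.1, x)) (vx p) p.2)
    (hvxx : ∀ p ∈ C, HasDerivAt (fun x => vx (p.1, x)) (vxx p) p.2)
    (hvxxc : ContinuousOn vxx C)
    (h4 : ∀ p ∈ C, 0 ≤ vt p + σ₀ ^ 2 / 2 * vxx p + μ p.2 * vx p - r * v p + h p)
    (h5 : ∀ x ≤ a t₀, g' t₀ - r * g t₀ + h (t₀, x) ≤ 0)
    (h6 : 0 < hx (t₀, a t₀)) :
    Filter.Tendsto a (nhdsWithin t₀ (Set.Iio t₀)) (nhds (a t₀)) := by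
  obtain ⟨ht0, htT⟩ := ht₀
  have hgc : Continuous g := continuous_iff_continuousAt.2 fun t => (hg t).continuousAt
  have hμ' : ∀ x, HasDerivAt μ (deriv μ x) x :=
    fun x => (hμ.differentiable one_ne_zero x).hasDerivAt
  have hμ'c : Continuous (deriv μ) := hμ.continuous_deriv le_rfl
  have hsource := source_add_generator_nonneg hr hg (fun p hp => (hC ▸ hp).1) h2 h3 hvt h4
  refine (ha.mono fun t ht => ⟨ht.1.le, ht.2.trans_lt htT⟩).tendsto_nhdsLT_of_forall_exists_lt
    ht0 fun y hy => ?_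
  by_contra! hgap
  obtain ⟨x₀, hx₀, hhlt⟩ := mem_nhdsLT_iff_exists_Ioo_subset.1
    ((hhx (t₀, a t₀) ⟨⟨ht0.le, htT.le⟩, trivial⟩).eventually_nhdsLT_lt h6)
  obtain ⟨x₁, hx₀₁, hx₁⟩ := exists_between (max_lt hy hx₀)
  obtain ⟨x₂, hx₁₂, hx₂⟩ := exists_between hx₁
  have hstrip : ∀ t ∈ Ioo 0 t₀, ∀ x ∈ [[x₁, x₂]], (t, x) ∈ C := by
    intro t ht x hxs
    rw [uIcc_of_le hx₁₂.le] at hxs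
    rw [hC]
    exact ⟨⟨ht.1, ht.2.trans htT⟩, by linarith [hgap t ht, le_max_left y x₀, hxs.1]⟩
  set φ := quarticBump x₁ x₂
  set ψ := quarticBumpAdjoint (σ₀ ^ 2 / 2) μ (deriv μ) x₁ x₂
  set F : ℝ × ℝ → ℝ := fun p => (g' p.1 - r * g p.1 + h p) * φ p.2 + v p * ψ p.2
  have hθ : ∀ t ∈ Icc 0 T, ContinuousOn (fun x => g' t - r * g t + h (t, x)) [[x₁, x₂]] :=
    fun t ht => continuousOn_const.add (hh.comp (by fun_prop) fun _ _ => ⟨ht, trivial⟩)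
  have hweak : ∀ t ∈ Ioo 0 t₀, 0 ≤ ∫ x in x₁..x₂, F (t, x) := fun t ht =>
    integral_mul_quarticBump_add_mul_quarticBumpAdjoint_nonneg hx₁₂.le
      (fun x hxs => hvx _ (hstrip t ht x hxs)) (fun x hxs => hvxx _ (hstrip t ht x hxs))
      (hvxxc.comp (by fun_prop) fun x hxs => hstrip t ht x hxs) hμ' hμ'c
      (hθ t ⟨ht.1.le, (ht.2.trans htT).le⟩) fun x hxs => hsource _ (hstrip t ht x hxs)
  have hFc : ContinuousOn F (Icc 0 T ×ˢ univ) :=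
    (((by fun_prop : Continuous fun p : ℝ × ℝ => g' p.1 - r * g p.1).continuousOn.add hh).mul
      (by unfold φ quarticBump; fun_prop)).add
      (hv.mul ((continuous_quarticBumpAdjoint hμ' hμ'c).comp continuous_snd).continuousOn)
  have hstop : ∫ x in x₁..x₂, F (t₀, x) < 0 := by
    have hv₀ : ∀ x ∈ [[x₁, x₂]],
        F (t₀, x) = (g' t₀ - r * g t₀ + h (t₀, x)) * φ x + g t₀ * ψ x := fun x hxs => by
      rw [uIcc_of_le hx₁₂.le] at hxs
      simp only [F, h1 t₀ ⟨ht0.le, htT⟩ x (by linarith [hxs.2])]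
    rw [integral_congr hv₀]
    refine integral_mul_quarticBump_add_const_mul_quarticBumpAdjoint_neg hx₁₂ _ hμ' hμ'c
      (hθ t₀ ⟨ht0.le, htT.le⟩) fun x hxs => ?_
    have hlt : h (t₀, x) < h (t₀, a t₀) :=
      hhlt ⟨by linarith [le_max_right y x₀, hxs.1], hxs.2.trans hx₂⟩
    linarith [h5 (a t₀) le_rfl]
  exact hstop.not_ge (integral_nonneg_of_forall_lt ht0
    (hFc.mono (prod_mono (Icc_subset_Icc_right htT.le) (subset_univ _))) hweak)

/-- under the stated hypotheses (free-boundary problem structure,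
`Θ(t₀,·) ≤ 0` below `a(t₀)` and `∂ₓh(t₀,a(t₀)) > 0`), the stopping boundary `a`
is left-continuous at `t₀`. -/
theorem stmt_8 (T t₀ σ₀ r : ℝ) (hT : 0 < T) (ht₀ : t₀ ∈ Set.Ioo 0 T)
    (hσ₀ : 0 < σ₀) (hr : 0 ≤ r)
    (μ : ℝ → ℝ) (hμ : ContDiff ℝ 1 μ)
    (g g' : ℝ → ℝ) (hg : ∀ t, HasDerivAt g (g' t) t) (hg' : Continuous g')
    (h hx : ℝ × ℝ → ℝ)
    (hh : ContinuousOn h (Set.Icc 0 T ×ˢ Set.univ))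
    (hhx : ∀ p ∈ (Set.Icc 0 T ×ˢ Set.univ : Set (ℝ × ℝ)),
      HasDerivAt (fun x => h (p.1, x)) (hx p) p.2)
    (hhxc : ContinuousOn hx (Set.Icc 0 T ×ˢ Set.univ))
    (v : ℝ × ℝ → ℝ) (hv : ContinuousOn v (Set.Icc 0 T ×ˢ Set.univ))
    (a : ℝ → ℝ) (ha : MonotoneOn a (Set.Ico 0 T))
    (h1 : ∀ t ∈ Set.Ico (0:ℝ) T, ∀ x ≤ a t, v (t, x) = g t)
    (h2 : ∀ t ∈ Set.Icc (0:ℝ) T, ∀ x : ℝ, g t ≤ v (t, x))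
    (h3 : ∀ x : ℝ, ∀ s ∈ Set.Icc (0:ℝ) T, ∀ t ∈ Set.Icc (0:ℝ) T, s ≤ t →
      v (t, x) - g t ≤ v (s, x) - g s)
    (C : Set (ℝ × ℝ)) (hC : C = {p : ℝ × ℝ | p.1 ∈ Set.Ioo 0 T ∧ a p.1 < p.2})
    (vt vx vxx : ℝ × ℝ → ℝ)
    (hvt : ∀ p ∈ C, HasDerivAt (fun t => v (t, p.2)) (vt p) p.1)
    (hvx : ∀ p ∈ C, HasDerivAt (fun x => v (p.1, x)) (vx p) p.2)
    (hvxx : ∀ p ∈ C, HasDerivAt (fun x => vx (p.1, x)) (vxx p) p.2)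
    (hvtc : ContinuousOn vt C) (hvxc : ContinuousOn vx C) (hvxxc : ContinuousOn vxx C)
    (h4 : ∀ p ∈ C, 0 ≤ vt p + σ₀ ^ 2 / 2 * vxx p + μ p.2 * vx p - r * v p + h p)
    (h5 : ∀ x ≤ a t₀, g' t₀ - r * g t₀ + h (t₀, x) ≤ 0)
    (h6 : 0 < hx (t₀, a t₀)) :
    Filter.Tendsto a (nhdsWithin t₀ (Set.Iio t₀)) (nhds (a t₀)) :=
  stmt_8_general T t₀ σ₀ r ht₀ hr μ hμ g g' hg hg' h hx hh hhx v hv a ha h1 h2 h3 C hC vt vx vxx hvt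
    hvx hvxx hvxxc h4 h5 h6
end

section
/- Then Θ(t,x) ≤ 0 for ALL (t,x) ∈ [0,T)×ℝ with x ≤ a(t); consequently, for each t ∈ [0,T) one has a(t) ≤ inf{y ∈ ℝ : Θ(t,y) > 0} (with the convention inf ∅ = +∞). -/
/-- if `Θ` is continuous and `Θ ≤ 0` a.e. on `{(t,x) : t ∈ [0,T), x < a(t)}`
with `a` non-decreasing, then `Θ(t,x) ≤ 0` for all such `(t,x)` with `x ≤ a(t)`;
consequently `a(t) ≤ inf{y : Θ(t,y) > 0}` (as extended reals, `inf ∅ = +∞`). -/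
theorem stmt_11 (T : ℝ) (hT : 0 < T) (Θ : ℝ × ℝ → ℝ)
    (hΘ : ContinuousOn Θ (Set.Icc 0 T ×ˢ Set.univ))
    (a : ℝ → ℝ) (ha : MonotoneOn a (Set.Ico 0 T))
    (hae : ∀ᵐ p : ℝ × ℝ ∂MeasureTheory.volume,
      p.1 ∈ Set.Ico (0:ℝ) T → p.2 < a p.1 → Θ p ≤ 0) :
    (∀ t ∈ Set.Ico (0:ℝ) T, ∀ x ≤ a t, Θ (t, x) ≤ 0) ∧
    ∀ t ∈ Set.Ico (0:ℝ) T,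
      (a t : EReal) ≤ sInf ((fun y : ℝ => (y : EReal)) '' {y : ℝ | 0 < Θ (t, y)}) := by
  have main : ∀ t ∈ Set.Ico (0:ℝ) T, ∀ x ≤ a t, Θ (t, x) ≤ 0 := by
    intro t ht x hx
    by_contra hpos
    push_neg at hpos
    have htmem : ((t, x) : ℝ × ℝ) ∈ Set.Icc (0:ℝ) T ×ˢ (Set.univ : Set ℝ) := by
      refine ⟨⟨ht.1, le_of_lt ht.2⟩, Set.mem_univ _⟩
    have hc : ContinuousWithinAt Θ (Set.Icc (0:ℝ) T ×ˢ (Set.univ : Set ℝ)) (t, x) :=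
      hΘ _ htmem
    have hev : ∀ᶠ p in nhdsWithin (t, x) (Set.Icc (0:ℝ) T ×ˢ (Set.univ : Set ℝ)),
        0 < Θ p := hc.eventually (eventually_gt_nhds hpos)
    rw [eventually_nhdsWithin_iff] at hev
    rw [Metric.eventually_nhds_iff] at hev
    obtain ⟨δ, hδ, hball⟩ := hev
    set η : ℝ := min (δ / 2) ((T - t) / 2) with hη
    have hη0 : 0 < η := lt_min (by linarith) (by have := ht.2; linarith)
    have hηδ : η < δ := lt_of_le_of_lt (min_le_left _ _) (by linarith)
    have hηT : t + η < T := by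
      have : η ≤ (T - t) / 2 := min_le_right _ _
      linarith
    set G : Set (ℝ × ℝ) := Set.Ioo t (t + η) ×ˢ Set.Ioo (x - η) x with hG
    have hGsub : ∀ p ∈ G, p.1 ∈ Set.Ico (0:ℝ) T ∧ p.2 < a p.1 ∧ 0 < Θ p := by
      rintro ⟨s, y⟩ ⟨hs, hy⟩
      simp only [Set.mem_Ioo] at hs hy
      have hs0 : (0:ℝ) ≤ s := le_trans ht.1 (le_of_lt hs.1)
      have hsT : s < T := lt_trans hs.2 hηT
      have hsIco : s ∈ Set.Ico (0:ℝ) T := ⟨hs0, hsT⟩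
      have hya : y < a s :=
        lt_of_lt_of_le (lt_of_lt_of_le hy.2 hx) (ha ht hsIco (le_of_lt hs.1))
      refine ⟨hsIco, hya, ?_⟩
      apply hball
      · rw [Prod.dist_eq]
        apply max_lt
        · rw [Real.dist_eq, abs_lt]; constructor <;> [linarith [hs.1]; linarith [hs.2]]
        · rw [Real.dist_eq, abs_lt]; constructor <;> [linarith [hy.2]; linarith [hy.1]]
      · exact ⟨⟨hs0, le_of_lt hsT⟩, Set.mem_univ _⟩
    -- G is contained in the exceptional null set
    have hnull : MeasureTheory.volume G = 0 := by
      refine MeasureTheory.measure_mono_null ?_ (MeasureTheory.ae_iff.mp hae)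
      intro p hp
      obtain ⟨h1, h2, h3⟩ := hGsub p hp
      simp only [Set.mem_setOf_eq]
      intro h
      exact absurd (h h1 h2) (not_le.mpr h3)
    have hopen : IsOpen G := isOpen_Ioo.prod isOpen_Ioo
    have hne : G.Nonempty := by
      refine ⟨(t + η / 2, x - η / 2), ?_, ?_⟩ <;>
        simp only [Set.mem_Ioo] <;> constructor <;> linarith
    exact (hopen.measure_pos MeasureTheory.volume hne).ne' hnull
  refine ⟨main, ?_⟩
  intro t ht
  refine le_sInf ?_
  rintro b ⟨y, hy, rfl⟩
  simp only [Set.mem_setOf_eq] at hy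
  rw [EReal.coe_le_coe_iff]
  by_contra hya
  push_neg at hya
  exact absurd (main t ht y (le_of_lt hya)) (not_le.mpr hy)
end

section
/- Under these hypotheses lim_{t↑T} a(t) = Θ̲(T), i.e. the stopping boundary reaches the threshold Θ̲(T) at the terminal time. -/
/-!
As `a` is non-decreasing and bounded by `Θ̲(T)`, it suffices to rule out `a(t) ≤ b < Θ̲(T)` for
all `t < T`; pick then `b < x₁ < x₃ < Θ̲(T)`. Since `Θ(T, ·)` is
strictly increasing below `Θ̲(T)`, it is negative on `[x₁, x₃]`, hence `Θ ≤ -ε` on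
`(T - δ, T) × [x₁, x₃]`, a strip lying in the continuation region. There `∂ₜv ≤ g'` (as `v - g`
is non-increasing in time) and `v ≥ g`, so the variational inequality gives
`(σ₀²/2) ∂ₓₓv + μ ∂ₓv ≥ ε`. A maximum principle applied to `v + A (x - x₁)(x₃ - x)` with `A > 0`
small then bounds `v(t, x₂)` below `max (v(t, x₁), v(t, x₃))` by a margin independent of `t`,
which is impossible since `v(t, ·) → g(T)` pointwise as `t ↑ T`.
-/

open Set Filter Topology

theorem MonotoneOn.tendsto_nhdsLT_of_isLUB {α β : Type*} [LinearOrder α] [TopologicalSpace α]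
    [OrderTopology α] [LinearOrder β] [TopologicalSpace β] [OrderTopology β] {f : α → β}
    {a b : α} {θ : β} (hab : a < b) (hf : MonotoneOn f (Ico a b)) (hθ : IsLUB (f '' Ico a b) θ) :
    Tendsto f (𝓝[<] b) (𝓝 θ) := by
  refine tendsto_order.2 ⟨fun y hy => ?_, fun y hy => ?_⟩
  · obtain ⟨_, ⟨t₀, ht₀, rfl⟩, hyt₀, -⟩ := hθ.exists_between hy
    filter_upwards [Ico_mem_nhdsLT ht₀.2] with t ht
    exact hyt₀.trans_le (hf ht₀ ⟨ht₀.1.trans ht.1, ht.2⟩ ht.1)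
  · filter_upwards [Ico_mem_nhdsLT hab] with t ht
    exact (hθ.1 (mem_image_of_mem f ht)).trans_lt hy

theorem HasDerivAt.nonpos_of_antitoneOn_of_mem_nhds {f : ℝ → ℝ} {f' x : ℝ} {s : Set ℝ}
    (hd : HasDerivAt f f' x) (hf : AntitoneOn f s) (hs : s ∈ 𝓝 x) : f' ≤ 0 :=
  hd.hasDerivWithinAt.nonpos_of_antitoneOn
    (by simpa using (PerfectSpace.univ_preperfect x (mem_univ x)).nhds_inter hs) hf

theorem neg_of_lt_sInf_of_hasDerivAt_pos {φ φ' : ℝ → ℝ} {z : ℝ}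
    (hbdd : BddBelow {y | 0 < φ y})
    (hφ : ∀ y < sInf {y | 0 < φ y}, HasDerivAt φ (φ' y) y)
    (hφ' : ∀ y < sInf {y | 0 < φ y}, 0 < φ' y) (hz : z < sInf {y | 0 < φ y}) : φ z < 0 := by
  obtain ⟨w, hzw, hw⟩ := exists_between hz
  have hmono : StrictMonoOn φ (Iio (sInf {y | 0 < φ y})) :=
    strictMonoOn_of_hasDerivWithinAt_pos (convex_Iio _)
      (fun y hy => (hφ y hy).continuousAt.continuousWithinAt)
      (fun y hy => (hφ y (by simpa using hy)).hasDerivWithinAt)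
      (fun y hy => hφ' y (by simpa using hy))
  have hφw : φ w ≤ 0 := not_lt.1 fun hpos => (csInf_le hbdd hpos).not_gt hw
  exact (hmono hz hw hzw).trans_le hφw

theorem IsCompact.exists_pos_eventually_forall_lt_neg {X Y : Type*} [TopologicalSpace X]
    [TopologicalSpace Y] {f : X × Y → ℝ} {s : Set X} {K : Set Y} {x₀ : X} (hK : IsCompact K)
    (hf : ContinuousOn f (s ×ˢ univ)) (hx₀ : x₀ ∈ s) (hneg : ∀ y ∈ K, f (x₀, y) < 0) :
    ∃ ε > 0, ∀ᶠ x in 𝓝[s] x₀, ∀ y ∈ K, f (x, y) < -ε := by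
  rcases K.eq_empty_or_nonempty with rfl | hKne
  · exact ⟨1, one_pos, by simp⟩
  have hslice : ContinuousOn (fun y => f (x₀, y)) K :=
    hf.comp (by fun_prop) fun y _ => ⟨hx₀, trivial⟩
  obtain ⟨y₀, hy₀, hmax⟩ := hK.exists_isMaxOn hKne hslice
  refine ⟨-f (x₀, y₀) / 2, by linarith [hneg y₀ hy₀], ?_⟩
  rw [eventually_nhdsWithin_iff]
  refine (hK.eventually_forall_of_forall_eventually
    (P := fun x y => x ∈ s → f (x, y) < -(-f (x₀, y₀) / 2)) fun y hy => ?_).mono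
    fun x hx hxs y hy => hx y hy hxs
  have hlt : f (x₀, y) < -(-f (x₀, y₀) / 2) := by
    linarith [hneg y₀ hy₀, show f (x₀, y) ≤ f (x₀, y₀) from hmax hy]
  filter_upwards [eventually_nhdsWithin_iff.1
    ((hf (x₀, y) ⟨hx₀, trivial⟩).tendsto.eventually_lt_const hlt)] with p hp hps
  exact hp ⟨hps, trivial⟩

section MaximumPrinciple

variable {u u' u'' b : ℝ → ℝ} {c x₁ x₃ : ℝ}

theorem le_max_of_hasDerivAt_of_pos (hc : 0 < c)
    (hu : ∀ x ∈ Icc x₁ x₃, HasDerivAt u (u' x) x)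
    (hu' : ∀ x ∈ Icc x₁ x₃, HasDerivAt u' (u'' x) x)
    (hpos : ∀ x ∈ Icc x₁ x₃, 0 < c * u'' x + b x * u' x) :
    ∀ x ∈ Icc x₁ x₃, u x ≤ max (u x₁) (u x₃) := by
  intro x hx
  obtain ⟨x₀, hx₀, hmax⟩ := isCompact_Icc.exists_isMaxOn ⟨x, hx⟩
    fun y hy => (hu y hy).continuousAt.continuousWithinAt
  suffices x₀ ∉ Ioo x₁ x₃ by
    have hx₀ : x₀ = x₁ ∨ x₀ = x₃ := by
      simp only [mem_Ioo, not_and_or, not_lt] at this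
      rcases this with h | h
      exacts [Or.inl (le_antisymm h hx₀.1), Or.inr (le_antisymm hx₀.2 h)]
    rcases hx₀ with rfl | rfl
    exacts [(hmax hx).trans (le_max_left _ _), (hmax hx).trans (le_max_right _ _)]
  intro hx₀'
  have hnhds : Icc x₁ x₃ ∈ 𝓝 x₀ := Icc_mem_nhds hx₀'.1 hx₀'.2
  have hlocmax : IsLocalMax u x₀ := hmax.isLocalMax hnhds
  have hu'₀ : u' x₀ = 0 := hlocmax.hasDerivAt_eq_zero (hu x₀ hx₀)
  have hu''₀ : 0 < u'' x₀ := by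
    have := hpos x₀ hx₀
    rw [hu'₀, mul_zero, add_zero] at this
    exact pos_of_mul_pos_right this hc.le
  have hderiv : deriv u =ᶠ[𝓝 x₀] u' := eventually_of_mem hnhds fun y hy => (hu y hy).deriv
  -- By the second-derivative test `x₀` is also a local minimum, so `u` is locally constant.
  have hlocmin : IsLocalMin u x₀ :=
    isLocalMin_of_deriv_deriv_pos (by rwa [hderiv.deriv_eq, (hu' x₀ hx₀).deriv])
      (by rw [hderiv.eq_of_nhds, hu'₀]) (hu x₀ hx₀).continuousAt
  have hconst : u =ᶠ[𝓝 x₀] fun _ => u x₀ :=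
    (hlocmin.and hlocmax).mono fun y hy => le_antisymm hy.2 hy.1
  have : deriv (deriv u) x₀ = 0 := by
    rw [hconst.deriv.deriv_eq]
    simp
  rw [hderiv.deriv_eq, (hu' x₀ hx₀).deriv] at this
  exact hu''₀.ne' this

theorem add_mul_le_max_of_hasDerivAt_of_le {ε M A : ℝ} (hc : 0 < c) (hA : 0 ≤ A)
    (hAε : (2 * c + M * (x₃ - x₁)) * A < ε) (hb : ∀ x ∈ Icc x₁ x₃, |b x| ≤ M)
    (hu : ∀ x ∈ Icc x₁ x₃, HasDerivAt u (u' x) x)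
    (hu' : ∀ x ∈ Icc x₁ x₃, HasDerivAt u' (u'' x) x)
    (hε : ∀ x ∈ Icc x₁ x₃, ε ≤ c * u'' x + b x * u' x) :
    ∀ x ∈ Icc x₁ x₃, u x + A * ((x - x₁) * (x₃ - x)) ≤ max (u x₁) (u x₃) := by
  have hw := le_max_of_hasDerivAt_of_pos (u := fun x => u x + A * ((x - x₁) * (x₃ - x)))
    (u' := fun x => u' x + A * (x₁ + x₃ - 2 * x)) (u'' := fun x => u'' x - 2 * A) (b := b) hc
    (fun x hx => ((hu x hx).add (((hasDerivAt_id' x).sub_const x₁).mul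
      ((hasDerivAt_id' x).const_sub x₃) |>.const_mul A)).congr_deriv (by ring))
    (fun x hx => ((hu' x hx).add ((((hasDerivAt_id' x).const_mul 2).const_sub (x₁ + x₃)).const_mul
      A)).congr_deriv (by ring))
    (fun x hx => by
      have hdrift : -(M * (x₃ - x₁)) * A ≤ b x * (x₁ + x₃ - 2 * x) * A := by
        refine mul_le_mul_of_nonneg_right ?_ hA
        have hlin : |x₁ + x₃ - 2 * x| ≤ x₃ - x₁ := abs_le.2 ⟨by linarith [hx.2], by linarith [hx.1]⟩
        have := abs_mul (b x) (x₁ + x₃ - 2 * x) ▸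
          mul_le_mul (hb x hx) hlin (abs_nonneg _) ((abs_nonneg _).trans (hb x hx))
        linarith [neg_abs_le (b x * (x₁ + x₃ - 2 * x))]
      nlinarith [hε x hx])
  simpa using hw

end MaximumPrinciple

theorem not_forall_tendsto_const_of_eventually_le {α : Type*} {l : Filter α} [l.NeBot]
    {u u' u'' : α → ℝ → ℝ} {b : ℝ → ℝ} {c ε x₁ x₃ L : ℝ} (hc : 0 < c) (hε : 0 < ε)
    (h₁₃ : x₁ < x₃) (hb : ContinuousOn b (Icc x₁ x₃))
    (hsub : ∀ᶠ t in l, ∀ x ∈ Icc x₁ x₃, HasDerivAt (u t) (u' t x) x ∧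
      HasDerivAt (u' t) (u'' t x) x ∧ ε ≤ c * u'' t x + b x * u' t x) :
    ¬ ∀ x ∈ Icc x₁ x₃, Tendsto (fun t => u t x) l (𝓝 L) := by
  intro hu
  obtain ⟨M, hM⟩ := isCompact_Icc.exists_bound_of_continuousOn hb
  obtain ⟨A, hA, hAε⟩ := exists_pos_mul_lt hε (2 * c + M * (x₃ - x₁))
  obtain ⟨x₂, h₁₂, h₂₃⟩ := exists_between h₁₃
  have hx₂ : x₂ ∈ Icc x₁ x₃ := ⟨h₁₂.le, h₂₃.le⟩
  have hmargin : 0 < A * ((x₂ - x₁) * (x₃ - x₂)) :=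
    mul_pos hA (mul_pos (sub_pos.2 h₁₂) (sub_pos.2 h₂₃))
  have hbarrier : ∀ᶠ t in l, u t x₂ + A * ((x₂ - x₁) * (x₃ - x₂)) ≤ max (u t x₁) (u t x₃) :=
    hsub.mono fun t ht => add_mul_le_max_of_hasDerivAt_of_le hc hA.le hAε
      (fun x hx => by simpa using hM x hx) (fun x hx => (ht x hx).1) (fun x hx => (ht x hx).2.1)
      (fun x hx => (ht x hx).2.2) x₂ hx₂
  have hlim := le_of_tendsto_of_tendsto ((hu x₂ hx₂).add_const _)
    ((hu x₁ (left_mem_Icc.2 h₁₃.le)).max (hu x₃ (right_mem_Icc.2 h₁₃.le))) hbarrier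
  rw [max_self] at hlim
  linarith

theorem stmt_12_general (T σ₀ r : ℝ) (hT : 0 < T) (hσ₀ : 0 < σ₀) (hr : 0 ≤ r)
    (μ : ℝ → ℝ) (hμ : ContDiff ℝ 1 μ)
    (g g' : ℝ → ℝ) (hg : ∀ t, HasDerivAt g (g' t) t) (hg' : Continuous g')
    (h hx : ℝ × ℝ → ℝ)
    (hh : ContinuousOn h (Set.Icc 0 T ×ˢ Set.univ))
    (hhx : ∀ p ∈ (Set.Icc 0 T ×ˢ Set.univ : Set (ℝ × ℝ)),
      HasDerivAt (fun x => h (p.1, x)) (hx p) p.2)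
    (ΘT : ℝ)
    (hbdd : BddBelow {y : ℝ | 0 < g' T - r * g T + h (T, y)})
    (hΘT : ΘT = sInf {y : ℝ | 0 < g' T - r * g T + h (T, y)})
    (v : ℝ × ℝ → ℝ) (hv : ContinuousOn v (Set.Icc 0 T ×ˢ Set.univ))
    (hvT : ∀ x : ℝ, v (T, x) = g T)
    (a : ℝ → ℝ) (ha : MonotoneOn a (Set.Ico 0 T))
    (haΘ : ∀ t ∈ Set.Ico (0:ℝ) T, a t ≤ ΘT)
    (h1 : ∀ t ∈ Set.Icc (0:ℝ) T, ∀ x : ℝ, g t ≤ v (t, x))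
    (h2 : ∀ x : ℝ, ∀ s ∈ Set.Icc (0:ℝ) T, ∀ t ∈ Set.Icc (0:ℝ) T, s ≤ t →
      v (t, x) - g t ≤ v (s, x) - g s)
    (C : Set (ℝ × ℝ)) (hC : C = {p : ℝ × ℝ | p.1 ∈ Set.Ioo 0 T ∧ a p.1 < p.2})
    (vt vx vxx : ℝ × ℝ → ℝ)
    (hvt : ∀ p ∈ C, HasDerivAt (fun t => v (t, p.2)) (vt p) p.1)
    (hvx : ∀ p ∈ C, HasDerivAt (fun x => v (p.1, x)) (vx p) p.2)
    (hvxx : ∀ p ∈ C, HasDerivAt (fun x => vx (p.1, x)) (vxx p) p.2)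
    (h3 : ∀ p ∈ C, 0 ≤ vt p + σ₀ ^ 2 / 2 * vxx p + μ p.2 * vx p - r * v p + h p)
    (h4 : ∀ x ≤ ΘT, 0 < hx (T, x)) :
    Filter.Tendsto a (nhdsWithin T (Set.Iio T)) (nhds ΘT) := by
  refine ha.tendsto_nhdsLT_of_isLUB hT ⟨fun _ ⟨t, ht, hat⟩ => hat ▸ haΘ t ht, fun b hb => ?_⟩
  by_contra! hbΘ
  obtain ⟨x₁, hbx₁, hx₁Θ⟩ := exists_between hbΘ
  obtain ⟨x₃, h₁₃, hx₃Θ⟩ := exists_between hx₁Θ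
  have hTmem : T ∈ Icc 0 T := right_mem_Icc.2 hT.le
  have hΘneg : ∀ y ∈ Icc x₁ x₃, g' T - r * g T + h (T, y) < 0 := by
    subst hΘT
    exact fun y hy => neg_of_lt_sInf_of_hasDerivAt_pos (φ := fun y => g' T - r * g T + h (T, y))
      hbdd (fun z _ => (hhx (T, z) ⟨hTmem, trivial⟩).const_add _) (fun z hz => h4 z hz.le)
      (hy.2.trans_lt hx₃Θ)
  have hΘcont : ContinuousOn (fun p : ℝ × ℝ => g' p.1 - r * g p.1 + h p) (Icc 0 T ×ˢ univ) := by
    have hgc : Continuous g := continuous_iff_continuousAt.2 fun t => (hg t).continuousAt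
    exact (by fun_prop : Continuous fun p : ℝ × ℝ => g' p.1 - r * g p.1).continuousOn.add hh
  obtain ⟨ε, hε, hΘε⟩ := isCompact_Icc.exists_pos_eventually_forall_lt_neg hΘcont hTmem hΘneg
  have hleft : 𝓝[<] T ≤ 𝓝[Icc 0 T] T :=
    nhdsWithin_le_of_mem (mem_of_superset (Ioo_mem_nhdsLT hT) Ioo_subset_Icc_self)
  have hsub : ∀ᶠ t in 𝓝[<] T, ∀ y ∈ Icc x₁ x₃, HasDerivAt (fun x => v (t, x)) (vx (t, y)) y ∧
      HasDerivAt (fun x => vx (t, x)) (vxx (t, y)) y ∧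
      ε ≤ σ₀ ^ 2 / 2 * vxx (t, y) + μ y * vx (t, y) := by
    filter_upwards [Ioo_mem_nhdsLT hT, hleft hΘε] with t ht hΘt y hy
    have hC' : (t, y) ∈ C :=
      hC ▸ ⟨ht, (hb (mem_image_of_mem a (Ioo_subset_Ico_self ht))).trans_lt (hbx₁.trans_le hy.1)⟩
    have hvtg : vt (t, y) ≤ g' t := sub_nonpos.1 <|
      ((hvt _ hC').sub (hg t)).nonpos_of_antitoneOn_of_mem_nhds (h2 y) (Icc_mem_nhds ht.1 ht.2)
    have hrg : r * g t ≤ r * v (t, y) :=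
      mul_le_mul_of_nonneg_left (h1 t (Ioo_subset_Icc_self ht) y) hr
    refine ⟨hvx _ hC', hvxx _ hC', ?_⟩
    linarith [h3 _ hC', hΘt y hy]
  refine not_forall_tendsto_const_of_eventually_le (u := fun t x => v (t, x))
    (by positivity) hε h₁₃ hμ.continuous.continuousOn hsub (L := g T) fun y _ => ?_
  have hvy : ContinuousOn (fun t => v (t, y)) (Icc 0 T) :=
    hv.comp (by fun_prop) fun t ht => ⟨ht, trivial⟩
  simpa only [hvT] using (hvy T hTmem).tendsto.mono_left hleft

/-- under the stated hypotheses, the stopping boundary reaches the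
threshold `Θ̲(T) = inf{y : Θ(T,y) > 0}` at the terminal time: `lim_{t↑T} a(t) = Θ̲(T)`. -/
theorem stmt_12 (T σ₀ r : ℝ) (hT : 0 < T) (hσ₀ : 0 < σ₀) (hr : 0 ≤ r)
    (μ : ℝ → ℝ) (hμ : ContDiff ℝ 1 μ)
    (g g' : ℝ → ℝ) (hg : ∀ t, HasDerivAt g (g' t) t) (hg' : Continuous g')
    (h hx : ℝ × ℝ → ℝ)
    (hh : ContinuousOn h (Set.Icc 0 T ×ˢ Set.univ))
    (hhx : ∀ p ∈ (Set.Icc 0 T ×ˢ Set.univ : Set (ℝ × ℝ)),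
      HasDerivAt (fun x => h (p.1, x)) (hx p) p.2)
    (hhxc : ContinuousOn hx (Set.Icc 0 T ×ˢ Set.univ))
    (ΘT : ℝ)
    (hne : {y : ℝ | 0 < g' T - r * g T + h (T, y)}.Nonempty)
    (hbdd : BddBelow {y : ℝ | 0 < g' T - r * g T + h (T, y)})
    (hΘT : ΘT = sInf {y : ℝ | 0 < g' T - r * g T + h (T, y)})
    (v : ℝ × ℝ → ℝ) (hv : ContinuousOn v (Set.Icc 0 T ×ˢ Set.univ))
    (hvT : ∀ x : ℝ, v (T, x) = g T)
    (a : ℝ → ℝ) (ha : MonotoneOn a (Set.Ico 0 T))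
    (haΘ : ∀ t ∈ Set.Ico (0:ℝ) T, a t ≤ ΘT)
    (h1 : ∀ t ∈ Set.Icc (0:ℝ) T, ∀ x : ℝ, g t ≤ v (t, x))
    (h2 : ∀ x : ℝ, ∀ s ∈ Set.Icc (0:ℝ) T, ∀ t ∈ Set.Icc (0:ℝ) T, s ≤ t →
      v (t, x) - g t ≤ v (s, x) - g s)
    (C : Set (ℝ × ℝ)) (hC : C = {p : ℝ × ℝ | p.1 ∈ Set.Ioo 0 T ∧ a p.1 < p.2})
    (vt vx vxx : ℝ × ℝ → ℝ)
    (hvt : ∀ p ∈ C, HasDerivAt (fun t => v (t, p.2)) (vt p) p.1)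
    (hvx : ∀ p ∈ C, HasDerivAt (fun x => v (p.1, x)) (vx p) p.2)
    (hvxx : ∀ p ∈ C, HasDerivAt (fun x => vx (p.1, x)) (vxx p) p.2)
    (hvtc : ContinuousOn vt C) (hvxc : ContinuousOn vx C) (hvxxc : ContinuousOn vxx C)
    (h3 : ∀ p ∈ C, 0 ≤ vt p + σ₀ ^ 2 / 2 * vxx p + μ p.2 * vx p - r * v p + h p)
    (h4 : ∀ x ≤ ΘT, 0 < hx (T, x)) :
    Filter.Tendsto a (nhdsWithin T (Set.Iio T)) (nhds ΘT) :=
  stmt_12_general T σ₀ r hT hσ₀ hr μ hμ g g' hg hg' h hx hh hhx ΘT hbdd hΘT v hv hvT a ha haΘ h1 h2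
    C hC vt vx vxx hvt hvx hvxx h3 h4
end
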